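/- arXiv:2210.09822 — 9 statements merged into one kernel-verified Lean document; each statement's English description precedes it below -/
import Mathlib

section
/- Let q = p^n ≡ 3 (mod 4) be an odd prime power and χ the quadratic character of 𝔽_q. Then ∑_{x ∈ 𝔽_q} χ(x(x²+x+1)) = ∑_{x ∈ 𝔽_q} χ(x(x+1)(x−3)). -/
open Finset

theorem stmt1 (p n : ℕ) (hp : p.Prime) (hp2 : p ≠ 2) (hn : 0 < n)
    (F : Type*) [Field F] [Fintype F] [DecidableEq F]
    (hcard : Fintype.card F = p ^ n) (hq : p ^ n % 4 = 3) :
    ∑ x : F, quadraticChar F (x * (x ^ 2 + x + 1)) = (∑ x : F, quadraticChar F (x * (x + 1) * (x - 3))) := by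
  have hF : ringChar F ≠ 2 := by
    intro h
    have := FiniteField.even_card_iff_char_two.mp h
    rw [hcard] at this
    omega
  have h2 : (2 : F) ≠ 0 := Ring.two_ne_zero hF
  set χ := quadraticChar F with hχ
  -- the fiber count lemma
  have key : ∀ t : F,
      (((univ.filter fun x : F => x + x⁻¹ + 1 = t ∧ x ≠ 0).card : ℤ))
        = χ ((t + 1) * (t - 3)) + 1 := by
    intro t
    have hd : ((t : F) - 1) ^ 2 - 4 = (t + 1) * (t - 3) := by ring
    rw [← hd, ← quadraticChar_card_sqrts hF (((t : F) - 1) ^ 2 - 4)]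
    norm_cast
    apply Finset.card_bij (fun x _ => 2 * x - (t - 1))
    · intro x hx
      simp only [mem_filter, mem_univ, true_and] at hx
      obtain ⟨hxt, hx0⟩ := hx
      have hinv : x * x⁻¹ = 1 := mul_inv_cancel₀ hx0
      have hquad : x ^ 2 - (t - 1) * x + 1 = 0 := by
        linear_combination x * hxt - hinv
      rw [Set.mem_toFinset]
      show (2 * x - (t - 1)) ^ 2 = (t - 1) ^ 2 - 4
      linear_combination 4 * hquad
    · intro x hx y hy hxy
      have h2x : (2 : F) * x = 2 * y := by linear_combination hxy
      exact mul_left_cancel₀ h2 h2x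
    · intro y hy
      rw [Set.mem_toFinset] at hy
      have hy2 : y ^ 2 = (t - 1) ^ 2 - 4 := hy
      have h2i : (2 : F) * 2⁻¹ = 1 := mul_inv_cancel₀ h2
      have h4 : (4 : F) ≠ 0 := fun h => h2 (mul_self_eq_zero.mp (by linear_combination h))
      have h2x : 2 * ((y + (t - 1)) * 2⁻¹) = y + (t - 1) := by
        linear_combination (y + (t - 1)) * h2i
      set x : F := (y + (t - 1)) * 2⁻¹ with hxdef
      have hx0 : x ≠ 0 := by
        intro h
        have hy' : y + (t - 1) = 0 := by linear_combination 2 * h - h2x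
        exact h4 (by linear_combination hy2 - (y - (t - 1)) * hy')
      have hquad : x ^ 2 - (t - 1) * x + 1 = 0 := by
        apply mul_left_cancel₀ h4
        linear_combination (2 * x + (y + (t - 1))) * h2x - 2 * (t - 1) * h2x + hy2
      refine ⟨x, ?_, by linear_combination h2x⟩
      simp only [mem_filter, mem_univ, true_and]
      have hinv : x * x⁻¹ = 1 := mul_inv_cancel₀ hx0
      exact ⟨by linear_combination x⁻¹ * hquad - (x - (t - 1)) * hinv, hx0⟩
  -- step 1: restrict to x ≠ 0 and rewrite the summand
  have step1 : ∑ x : F, χ (x * (x ^ 2 + x + 1))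
      = ∑ x ∈ univ.filter (fun x : F => x ≠ 0), χ (x + x⁻¹ + 1) := by
    rw [Finset.sum_filter]
    apply Finset.sum_congr rfl
    intro x _
    split_ifs with hx
    · have hinv : x * x⁻¹ = 1 := mul_inv_cancel₀ hx
      have hxx : x * (x ^ 2 + x + 1) = x ^ 2 * (x + x⁻¹ + 1) := by
        linear_combination (-x) * hinv
      rw [hxx, map_mul, quadraticChar_sq_one' hx, one_mul]
    · push_neg at hx
      simp [hx, hχ]
  -- step 2: fiberwise
  have step2 : ∑ x ∈ univ.filter (fun x : F => x ≠ 0), χ (x + x⁻¹ + 1)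
      = ∑ t : F, ((univ.filter fun x : F => x + x⁻¹ + 1 = t ∧ x ≠ 0).card : ℤ) * χ t := by
    rw [← Finset.sum_fiberwise' (univ.filter (fun x : F => x ≠ 0))
        (fun x => x + x⁻¹ + 1) (fun t => χ t)]
    apply Finset.sum_congr rfl
    intro t _
    rw [Finset.sum_const, nsmul_eq_mul]
    have hs : (univ.filter (fun x : F => x ≠ 0)).filter (fun x => x + x⁻¹ + 1 = t)
        = univ.filter fun x : F => x + x⁻¹ + 1 = t ∧ x ≠ 0 := by
      ext x
      simp only [mem_filter, mem_univ, true_and]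
      tauto
    rw [hs]
  rw [step1, step2]
  have hterm : ∀ t : F, ((univ.filter fun x : F => x + x⁻¹ + 1 = t ∧ x ≠ 0).card : ℤ) * χ t
      = χ (t * ((t + 1) * (t - 3))) + χ t := by
    intro t
    rw [key t, add_mul, one_mul, mul_comm, map_mul χ t ((t + 1) * (t - 3))]
  rw [Finset.sum_congr rfl fun t _ => hterm t, Finset.sum_add_distrib,
    quadraticChar_sum_zero hF, add_zero]
  apply Finset.sum_congr rfl
  intro x _
  rw [mul_assoc]
end

section
/- Let q = p^n ≡ 3 (mod 4) be an odd prime power and χ the quadratic character of 𝔽_q. Then ∑_{x ∈ 𝔽_q} χ((x+1)(x²+x+1)) = −∑_{x ∈ 𝔽_q} χ(x(x+1)(x−3)). -/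
/-!
Shifting `x ↦ x - 1` turns the left-hand side into `∑ χ(x (x² - x + 1))`, and for `x ≠ 0` the
argument is `x² (x + x⁻¹ - 1)`. The equation `x + x⁻¹ = t` has `1 + χ(t² - 4)` nonzero solutions
(complete the square), so the sum becomes `∑ₜ (1 + χ(t² - 4)) χ(t - 1) = ∑ₜ χ((t² - 4)(t - 1))`,
a cubic that the substitution `t = 1 - x` turns into `-x (x + 1) (x - 3)`. Finally `χ(-1) = -1` because
`q ≡ 3 (mod 4)`.
-/

open Finset

namespace FiniteField

variable {F : Type*} [Field F] [Fintype F] [DecidableEq F]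

lemma card_filter_add_inv_eq (hF : ringChar F ≠ 2) (t : F) :
    (#{x ∈ univ.erase 0 | x + x⁻¹ = t} : ℤ) = quadraticChar F (t ^ 2 - 4) + 1 := by
  have h2 : (2 : F) ≠ 0 := Ring.two_ne_zero hF
  rw [← quadraticChar_card_sqrts hF]
  norm_cast
  -- `x + x⁻¹ = t` is `x² - t x + 1 = 0`, i.e. `(2x - t)² = t² - 4`
  refine card_bij' (fun x _ ↦ 2 * x - t) (fun y _ ↦ (y + t) / 2) ?_ ?_ ?_ ?_
  · simp only [mem_filter, mem_erase, mem_univ, and_true, Set.mem_toFinset, Set.mem_ofPred_eq]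
    rintro x ⟨hx0, rfl⟩
    field_simp
    ring
  · simp only [mem_filter, mem_erase, mem_univ, and_true, Set.mem_toFinset, Set.mem_ofPred_eq]
    intro y hy
    have hyt : y + t ≠ 0 := by
      rintro h
      have : (4 : F) = 0 := by linear_combination hy + (t - y) * h
      exact h2 (pow_eq_zero_iff two_ne_zero |>.mp (by linear_combination this))
    refine ⟨div_ne_zero hyt h2, ?_⟩
    field_simp
    linear_combination hy
  · intro x _
    field_simp
    ring
  · intro y _
    field_simp
    ring

lemma sum_comp_add_inv (hF : ringChar F ≠ 2) (f : F → ℤ) :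
    ∑ x ∈ univ.erase 0, f (x + x⁻¹) = ∑ t, (quadraticChar F (t ^ 2 - 4) + 1) * f t := by
  rw [← sum_fiberwise (univ.erase 0) (fun x ↦ x + x⁻¹)]
  refine sum_congr rfl fun t _ ↦ ?_
  rw [sum_congr rfl fun x hx ↦ by rw [(mem_filter.mp hx).2], sum_const, nsmul_eq_mul,
    card_filter_add_inv_eq hF]

lemma sum_quadraticChar_sub (hF : ringChar F ≠ 2) (c : F) :
    ∑ t, quadraticChar F (t - c) = 0 :=
  ((Equiv.subRight c).sum_comp (quadraticChar F)).trans (quadraticChar_sum_zero hF)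

theorem sum_quadraticChar_add_one_mul_sq_add_add_one (hF : ringChar F ≠ 2) :
    ∑ x : F, quadraticChar F ((x + 1) * (x ^ 2 + x + 1)) =
      ∑ x : F, quadraticChar F ((x ^ 2 - 4) * (x - 1)) := by
  calc ∑ x : F, quadraticChar F ((x + 1) * (x ^ 2 + x + 1))
      = ∑ x : F, quadraticChar F (x * (x ^ 2 - x + 1)) :=
        Fintype.sum_equiv (Equiv.addRight 1) _ _ fun x ↦ by simp only [Equiv.coe_addRight]; ring_nf
    _ = ∑ x ∈ univ.erase 0, quadraticChar F (x + x⁻¹ - 1) := by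
        rw [← sum_erase univ (a := 0) (by simp)]
        refine sum_congr rfl fun x hx ↦ ?_
        have hx0 : x ≠ 0 := ne_of_mem_erase hx
        rw [show x * (x ^ 2 - x + 1) = x ^ 2 * (x + x⁻¹ - 1) by field_simp; ring, map_mul,
          quadraticChar_sq_one' hx0, one_mul]
    _ = ∑ t, (quadraticChar F (t ^ 2 - 4) + 1) * quadraticChar F (t - 1) :=
        sum_comp_add_inv hF fun t ↦ quadraticChar F (t - 1)
    _ = ∑ x : F, quadraticChar F ((x ^ 2 - 4) * (x - 1)) := by
        simp only [add_mul, one_mul, sum_add_distrib, sum_quadraticChar_sub hF, add_zero, map_mul]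

end FiniteField

theorem stmt2_general (p n : ℕ)
    (F : Type*) [Field F] [Fintype F] [DecidableEq F]
    (hcard : Fintype.card F = p ^ n) (hq : p ^ n % 4 = 3) :
    ∑ x : F, quadraticChar F ((x + 1) * (x ^ 2 + x + 1)) = - (∑ x : F, quadraticChar F (x * (x + 1) * (x - 3))) := by
  rw [← hcard] at hq
  have hF : ringChar F ≠ 2 := fun h ↦ by
    have := FiniteField.even_card_iff_char_two.mp h
    omega
  have hneg : quadraticChar F (-1) = -1 :=
    quadraticChar_neg_one_iff_not_isSquare.mpr (FiniteField.isSquare_neg_one_iff.not_left.mpr hq)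
  rw [FiniteField.sum_quadraticChar_add_one_mul_sq_add_add_one hF,
    ← Equiv.sum_comp (Equiv.subLeft 1), ← sum_neg_distrib]
  refine sum_congr rfl fun x _ ↦ ?_
  rw [Equiv.subLeft_apply,
    show ((1 - x) ^ 2 - 4) * (1 - x - 1) = -1 * (x * (x + 1) * (x - 3)) by ring, map_mul, hneg,
    neg_one_mul]

theorem stmt2 (p n : ℕ) (hp : p.Prime) (hp2 : p ≠ 2) (hn : 0 < n)
    (F : Type*) [Field F] [Fintype F] [DecidableEq F]
    (hcard : Fintype.card F = p ^ n) (hq : p ^ n % 4 = 3) :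
    ∑ x : F, quadraticChar F ((x + 1) * (x ^ 2 + x + 1)) = - (∑ x : F, quadraticChar F (x * (x + 1) * (x - 3))) :=
  stmt2_general p n F hcard hq
end

section
/- Let q = p^n ≡ 3 (mod 4) be an odd prime power and χ the quadratic character of 𝔽_q. Then ∑_{x ∈ 𝔽_q} χ((x²+x)(x²+x+1)) = −∑_{x ∈ 𝔽_q} χ(x(x+1)(x−3)) − 1. -/
/-!
Substituting `u = 2x + 1` turns the summand into `χ((u² - 1)(u² + 3))`, a function of `u²`.
Since `y` has `1 + χ(y)` square roots, the sum splits into `∑ χ((y - 1)(y + 3))`, which is `-1`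
like every character sum of a quadratic with distinct roots, and `∑ χ(y(y - 1)(y + 3))`.
Finally `y ↦ -y` and `χ(-1) = -1` (as `q ≡ 3 mod 4`) turn the latter into `-∑ χ(y(y + 1)(y - 3))`.
-/

open Finset

section QuadraticCharSums

variable {F : Type*} [Field F] [Fintype F] [DecidableEq F]

theorem quadraticChar_sum_mul_add (hF : ringChar F ≠ 2) {a : F} (ha : a ≠ 0) :
    ∑ y : F, quadraticChar F (y * (y + a)) = -1 := by
  -- `y (y + a) = y² (1 + a / y)` away from `y = 0`, where the right side picks up a spurious `χ 1`
  have hterm (y : F) : quadraticChar F (y * (y + a)) =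
      quadraticChar F (1 + a * y⁻¹) - if y = 0 then 1 else 0 := by
    rcases eq_or_ne y 0 with rfl | hy
    · simp
    · rw [if_neg hy, sub_zero, show y * (y + a) = y ^ 2 * (1 + a * y⁻¹) by field_simp, map_mul,
        quadraticChar_sq_one' hy, one_mul]
  have hshifted : ∑ y : F, quadraticChar F (1 + a * y⁻¹) = 0 :=
    calc ∑ y : F, quadraticChar F (1 + a * y⁻¹)
        = ∑ t : F, quadraticChar F (1 + a * t) :=
          Equiv.sum_comp (Equiv.inv F) fun t => quadraticChar F (1 + a * t)
      _ = ∑ t : F, quadraticChar F (1 + t) :=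
          Equiv.sum_comp (Equiv.mulLeft₀ a ha) fun t => quadraticChar F (1 + t)
      _ = ∑ t : F, quadraticChar F t := Equiv.sum_comp (Equiv.addLeft 1) (quadraticChar F)
      _ = 0 := quadraticChar_sum_zero hF
  rw [sum_congr rfl fun y _ => hterm y, sum_sub_distrib, sum_ite_eq' univ (0 : F),
    if_pos (mem_univ _), hshifted, zero_sub]

theorem sum_comp_sq {M : Type*} [AddCommGroup M] (hF : ringChar F ≠ 2) (f : F → M) :
    ∑ x : F, f (x ^ 2) = ∑ y : F, (1 + quadraticChar F y) • f y := by
  rw [← sum_fiberwise' univ (fun x => x ^ 2) f]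
  refine sum_congr rfl fun y _ => ?_
  rw [sum_const, ← natCast_zsmul, add_comm (1 : ℤ), ← quadraticChar_card_sqrts hF y]
  congr 3
  ext x
  simp

theorem quadraticChar_sum_quartic_eq_cubic (hF : ringChar F ≠ 2) :
    ∑ x : F, quadraticChar F ((x ^ 2 + x) * (x ^ 2 + x + 1)) =
      ∑ y : F, quadraticChar F (y * (y - 1) * (y + 3)) - 1 := by
  have h2 : (2 : F) ≠ 0 := Ring.two_ne_zero hF
  have h4 : (4 : F) ≠ 0 := by simpa [show (4 : F) = 2 ^ 2 by norm_num] using h2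
  have hsq (x : F) : quadraticChar F ((x ^ 2 + x) * (x ^ 2 + x + 1)) =
      quadraticChar F (((2 * x + 1) ^ 2 - 1) * ((2 * x + 1) ^ 2 + 3)) := by
    rw [show ((2 * x + 1) ^ 2 - 1) * ((2 * x + 1) ^ 2 + 3) =
        4 ^ 2 * ((x ^ 2 + x) * (x ^ 2 + x + 1)) by ring,
      map_mul (quadraticChar F) (4 ^ 2), quadraticChar_sq_one' h4, one_mul]
  have hnonsq : ∑ y : F, quadraticChar F ((y - 1) * (y + 3)) = -1 := by
    rw [← Equiv.sum_comp (Equiv.addRight 1)]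
    simpa [add_assoc, show (1 : F) + 3 = 4 by norm_num] using quadraticChar_sum_mul_add hF h4
  calc ∑ x : F, quadraticChar F ((x ^ 2 + x) * (x ^ 2 + x + 1))
      = ∑ u : F, quadraticChar F ((u ^ 2 - 1) * (u ^ 2 + 3)) := by
        simp_rw [hsq]
        exact ((Equiv.mulLeft₀ 2 h2).trans (Equiv.addRight 1)).sum_comp
          fun u => quadraticChar F ((u ^ 2 - 1) * (u ^ 2 + 3))
    _ = ∑ y : F, (1 + quadraticChar F y) • quadraticChar F ((y - 1) * (y + 3)) :=
        sum_comp_sq hF fun y => quadraticChar F ((y - 1) * (y + 3))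
    _ = ∑ y : F, quadraticChar F (y * (y - 1) * (y + 3)) - 1 := by
        simp_rw [smul_eq_mul, add_mul, one_mul, sum_add_distrib, hnonsq, ← map_mul, mul_assoc]
        ring

end QuadraticCharSums

theorem stmt3_general (p n : ℕ)
    (F : Type*) [Field F] [Fintype F] [DecidableEq F]
    (hcard : Fintype.card F = p ^ n) (hq : p ^ n % 4 = 3) :
    ∑ x : F, quadraticChar F ((x ^ 2 + x) * (x ^ 2 + x + 1)) = - (∑ x : F, quadraticChar F (x * (x + 1) * (x - 3))) - 1 := by
  have hF : ringChar F ≠ 2 := fun h => by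
    have := FiniteField.even_card_of_char_two h
    omega
  have hneg_one : quadraticChar F (-1) = -1 := by
    rw [quadraticChar_neg_one hF, hcard, ZMod.χ₄_nat_three_mod_four hq]
  rw [quadraticChar_sum_quartic_eq_cubic hF, ← Equiv.sum_comp (Equiv.neg F), ← sum_neg_distrib]
  congr 1
  refine sum_congr rfl fun z _ => ?_
  rw [Equiv.neg_apply, show -z * (-z - 1) * (-z + 3) = -1 * (z * (z + 1) * (z - 3)) by ring,
    map_mul, hneg_one, neg_one_mul]

theorem stmt3 (p n : ℕ) (hp : p.Prime) (hp2 : p ≠ 2) (hn : 0 < n)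
    (F : Type*) [Field F] [Fintype F] [DecidableEq F]
    (hcard : Fintype.card F = p ^ n) (hq : p ^ n % 4 = 3) :
    ∑ x : F, quadraticChar F ((x ^ 2 + x) * (x ^ 2 + x + 1)) = - (∑ x : F, quadraticChar F (x * (x + 1) * (x - 3))) - 1 :=
  stmt3_general p n F hcard hq
end

section
/- Let q = p^n ≡ 3 (mod 4) be an odd prime power with p ≠ 3, and χ the quadratic character of 𝔽_q. Then ∑_{x ∈ 𝔽_q} χ(x(3x²+2x+3)) = ∑_{x ∈ 𝔽_q} χ(x(x+1)(x−2)). -/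
/-!
For `b ≠ 0` the curves `y² = x(x² + a x + b)` and `y² = x(x² - 2a x + a² - 4b)` are 2-isogenous, so
their character sums agree. Directly: for `x ≠ 0` one has `χ(x(x² + a x + b)) = χ(t + a)` with
`t = x + b/x`, and each `t` arises from `1 + χ(t² - 4b)` values of `x`; hence the first sum is
`∑ₜ (1 + χ(t² - 4b)) χ(t + a) = ∑ₜ χ((t² - 4b)(t + a))`, which is the second sum after `t ↦ t - a`.
The theorem is the case `a = 2`, `b = 9`, after rescaling `x ↦ x/3` on the left and `x ↦ 4x`
on the right.
-/

open Finset

section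

variable {F : Type*} [Field F] [Fintype F] [DecidableEq F]

local notation "χ" => quadraticChar F

lemma quadraticChar_sq_mul {c : F} (hc : c ≠ 0) (y : F) : χ (c ^ 2 * y) = χ y := by
  rw [map_mul, quadraticChar_sq_one' hc, one_mul]

lemma sum_quadraticChar_eq_of_comp_mul_eq_sq_mul {u c : F} (hu : u ≠ 0) (hc : c ≠ 0) {f g : F → F}
    (h : ∀ x, f (u * x) = c ^ 2 * g x) : ∑ x, χ (f x) = ∑ x, χ (g x) := by
  rw [← Equiv.sum_comp (Equiv.mulLeft₀ u hu)]
  simp only [Equiv.mulLeft₀_apply, h, quadraticChar_sq_mul hc]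

lemma card_roots_sq_sub_mul_add (hF : ringChar F ≠ 2) (t b : F) :
    (#{x : F | x ^ 2 - t * x + b = 0} : ℤ) = χ (t ^ 2 - 4 * b) + 1 := by
  have h2 : (2 : F) ≠ 0 := Ring.two_ne_zero hF
  rw [← quadraticChar_card_sqrts hF, Set.toFinset_ofPred]
  congr 1
  -- completing the square: `x ^ 2 - t * x + b = ((2 * x - t) ^ 2 - (t ^ 2 - 4 * b)) / 4`
  refine card_nbij' (fun x => 2 * x - t) (fun y => (y + t) / 2) ?_ ?_ ?_ ?_ <;>
    simp only [coe_filter, mem_univ, true_and, Set.MapsTo, Set.LeftInvOn, Set.mem_ofPred_eq]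
  · intro x hx
    linear_combination 4 * hx
  · intro y hy
    field_simp
    linear_combination hy
  · intro x _
    field_simp
    ring
  · intro y _
    field_simp
    ring

lemma sum_ite_sq_sub_mul_add_eq_zero {b : F} (hb : b ≠ 0) (a x : F) :
    ∑ t : F, (if x ^ 2 - t * x + b = 0 then χ (t + a) else 0) = χ (x * (x ^ 2 + a * x + b)) := by
  rcases eq_or_ne x 0 with rfl | hx
  · simp [hb]
  have hroot : ∀ t, x ^ 2 - t * x + b = 0 ↔ (x ^ 2 + b) / x = t := fun t => by
    rw [div_eq_iff hx]
    constructor <;> intro h <;> linear_combination h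
  simp only [hroot, sum_ite_eq, mem_univ, if_true]
  rw [← quadraticChar_sq_mul hx]
  congr 1
  field_simp
  ring

lemma sum_quadraticChar_mul_eq_sum_card_roots (a : F) {b : F} (hb : b ≠ 0) :
    ∑ x : F, χ (x * (x ^ 2 + a * x + b))
      = ∑ t : F, (#{x : F | x ^ 2 - t * x + b = 0} : ℤ) * χ (t + a) := by
  simp only [← sum_ite_sq_sub_mul_add_eq_zero hb a, ← sum_boole, sum_mul, boole_mul]
  exact sum_comm

theorem sum_quadraticChar_two_isogeny (hF : ringChar F ≠ 2) (a : F) {b : F} (hb : b ≠ 0) :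
    ∑ x : F, χ (x * (x ^ 2 + a * x + b))
      = ∑ x : F, χ (x * (x ^ 2 - 2 * a * x + (a ^ 2 - 4 * b))) := by
  calc ∑ x : F, χ (x * (x ^ 2 + a * x + b))
      = ∑ t : F, (χ (t ^ 2 - 4 * b) + 1) * χ (t + a) := by
        simp only [sum_quadraticChar_mul_eq_sum_card_roots a hb, card_roots_sq_sub_mul_add hF]
    _ = ∑ t : F, χ ((t ^ 2 - 4 * b) * (t + a)) + ∑ t : F, χ (t + a) := by
        simp only [map_mul, add_mul, one_mul, sum_add_distrib]
    _ = ∑ t : F, χ ((t ^ 2 - 4 * b) * (t + a)) := by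
        rw [Fintype.sum_equiv (Equiv.addRight a) (fun t => χ (t + a)) χ fun _ => rfl,
          quadraticChar_sum_zero hF, add_zero]
    _ = ∑ x : F, χ (x * (x ^ 2 - 2 * a * x + (a ^ 2 - 4 * b))) := by
        rw [← Equiv.sum_comp (Equiv.subRight a)]
        congr! 2 with x
        simp only [Equiv.subRight_apply]
        ring

end

theorem stmt4_general (p n : ℕ) (hp : p.Prime) (hp2 : p ≠ 2) (hp3 : p ≠ 3)
    (F : Type*) [Field F] [Fintype F] [DecidableEq F]
    (hcard : Fintype.card F = p ^ n) :
    ∑ x : F, quadraticChar F (x * (3 * x ^ 2 + 2 * x + 3)) = (∑ x : F, quadraticChar F (x * (x + 1) * (x - 2))) := by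
  have := Fact.mk hp
  have := charP_of_card_eq_prime_pow hcard
  have hF : ringChar F ≠ 2 := by rwa [ringChar.eq F p]
  have h2 : (2 : F) ≠ 0 := Ring.two_ne_zero hF
  have h3 : (3 : F) ≠ 0 := fun h => hp3 <| (Nat.prime_dvd_prime_iff_eq hp Nat.prime_three).mp <|
    (CharP.cast_eq_zero_iff F p 3).mp (mod_cast h)
  calc ∑ x : F, quadraticChar F (x * (3 * x ^ 2 + 2 * x + 3))
      = ∑ x : F, quadraticChar F (x * (x ^ 2 + 2 * x + 9)) :=
        sum_quadraticChar_eq_of_comp_mul_eq_sq_mul (inv_ne_zero h3) (inv_ne_zero h3) fun x => by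
          field_simp
          ring
    _ = ∑ x : F, quadraticChar F (x * (x ^ 2 - 2 * 2 * x + (2 ^ 2 - 4 * 9))) :=
        sum_quadraticChar_two_isogeny hF 2 (by simpa [show (9 : F) = 3 ^ 2 by norm_num] using h3)
    _ = ∑ x : F, quadraticChar F (x * (x + 1) * (x - 2)) :=
        sum_quadraticChar_eq_of_comp_mul_eq_sq_mul (pow_ne_zero 2 h2) (pow_ne_zero 3 h2) fun x => by
          ring

theorem stmt4 (p n : ℕ) (hp : p.Prime) (hp2 : p ≠ 2) (hp3 : p ≠ 3) (hn : 0 < n)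
    (F : Type*) [Field F] [Fintype F] [DecidableEq F]
    (hcard : Fintype.card F = p ^ n) (hq : p ^ n % 4 = 3) :
    ∑ x : F, quadraticChar F (x * (3 * x ^ 2 + 2 * x + 3)) = (∑ x : F, quadraticChar F (x * (x + 1) * (x - 2))) :=
  stmt4_general p n hp hp2 hp3 F hcard
end

section
/- Let q = p^n ≡ 3 (mod 4) be an odd prime power with p ≠ 3, and χ the quadratic character of 𝔽_q. The number of solutions (y₁, y₂, y₃) ∈ (𝔽_q*)³ of the system y₁+y₂+y₃+1 = 0 and y₁²+y₂²+y₃²+1 = 0 with χ(y₁) = χ(y₂) = 1 and χ(y₃) = −1 equals (1/8)(q − 3λ₁ − 3 − 4χ(−3)), where λ₁ = ∑_{x ∈ 𝔽_q} χ(x(x+1)(x−3)). -/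
/-!
Put `y₂ = -1 - y₁ - y₃`: the solutions form the conic `y₁² + (1 + y₃) y₁ + y₃² + y₃ + 1 = 0`, on
which `y₁ y₂ = y₃² + y₃ + 1` and whose fibre over `y₃ = t` has `1 + χ(-3t² - 2t - 3)` points.
On `{-1, 0, 1}` the polynomials `s² + s` and `s² - s` are twice the indicators of `1` and `-1`, so
eight times the count is a signed sum of moments `∑ χ(y₁)ᵃ χ(y₂)ᵇ χ(y₃)ᶜ` over the conic; permuting
coordinates leaves four of them, each a character sum in the single variable `t`. The polynomials
involved are palindromic up to squares, so the substitution `u = t + t⁻¹` (whose fibres have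
`1 + χ(u² - 4)` points) and Möbius changes of variable reduce them to `λ₁`, to quadratic sums
`∑ χ(a x² + b x + c) = -χ(a)`, and to a cubic sum over a curve 2-isogenous to
`y² = x (x + 1) (x - 3)`; in particular the genus-two sum `∑ χ(t (t² + t + 1) (-3t² - 2t - 3))`
equals `2 λ₁`.
-/

open Finset

section ChangeOfVariables

variable {F M : Type*} [Field F] [Fintype F] [AddCommGroup M]

theorem sum_eq_of_eq_comp_affine {φ ψ : F → M} {a : F} (ha : a ≠ 0) (b : F)
    (h : ∀ x, φ x = ψ (a * x + b)) : ∑ x, φ x = ∑ x, ψ x :=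
  Fintype.sum_bijective _ ((Equiv.addRight b).bijective.comp (Equiv.mulLeft₀ a ha).bijective)
    _ _ h

theorem sum_eq_sum_add_sub_of_forall_ne {ι : Type*} [Fintype ι] [DecidableEq ι] {φ ψ : ι → M}
    (a : ι) (h : ∀ x ≠ a, φ x = ψ x) : ∑ x, φ x = ∑ x, ψ x + (φ a - ψ a) := by
  rw [← add_sum_erase _ φ (mem_univ a), ← add_sum_erase _ ψ (mem_univ a),
    sum_congr rfl fun x hx => h x (ne_of_mem_erase hx)]
  abel

theorem sum_eq_of_comp_inv_affine {φ ψ : F → M} {a : F} (ha : a ≠ 0) (b c : F)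
    (h : ∀ x, a * x + b ≠ 0 → φ ((a * x + b)⁻¹ + c) = ψ x) :
    ∑ x, φ x = ∑ x, ψ x + (φ c - ψ (-b / a)) := by
  classical
  have hpole : a * (-b / a) + b = 0 := by field_simp; ring
  have hmoebius : ∑ x, φ x = ∑ x, φ ((a * x + b)⁻¹ + c) :=
    calc ∑ x, φ x = ∑ x, φ (x + c) :=
          sum_eq_of_eq_comp_affine one_ne_zero (-c) fun x => by rw [one_mul, neg_add_cancel_right]
      _ = ∑ x, φ (x⁻¹ + c) :=
          Fintype.sum_bijective _ inv_involutive.bijective _ _ fun x => by rw [inv_inv]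
      _ = ∑ x, φ ((a * x + b)⁻¹ + c) := (sum_eq_of_eq_comp_affine ha b fun _ => rfl).symm
  rw [hmoebius, sum_eq_sum_add_sub_of_forall_ne (-b / a) fun x hx =>
    h x fun h0 => hx (by field_simp; linear_combination h0), hpole, inv_zero, zero_add]

theorem sum_comp_eq_sum_card_mul {ι κ : Type*} [Fintype κ] [DecidableEq κ] (s : Finset ι)
    (φ : ι → κ) (g : κ → ℤ) : ∑ x ∈ s, g (φ x) = ∑ y, #{x ∈ s | φ x = y} * g y := by
  rw [← sum_fiberwise' s φ g]
  simp only [sum_const, nsmul_eq_mul]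

end ChangeOfVariables

section QuadraticCharSums

variable {F : Type*} [Field F] [Fintype F] [DecidableEq F]

local notation "χ" => quadraticChar F

theorem quadraticChar_eq_of_eq_mul_sq {x x' y : F} (hy : y ≠ 0) (h : x = x' * y ^ 2) :
    χ x = χ x' := by
  rw [h, map_mul, quadraticChar_sq_one' hy, mul_one]

theorem quadraticChar_eq_one_of_sq_add_add_one {t : F} (ht : t ^ 2 + t + 1 = 0) : χ t = 1 := by
  have ht0 : t ≠ 0 := by rintro rfl; simp at ht
  have hcube : χ t ^ 3 = 1 := by
    rw [← map_pow, show t ^ 3 = 1 by linear_combination (t - 1) * ht, map_one]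
  rcases quadraticChar_dichotomy ht0 with h | h
  · exact h
  · rw [h] at hcube; norm_num at hcube

theorem sum_mul_quadraticChar_sq (w : F → ℤ) (P : F → F) :
    ∑ t, w t * χ (P t) ^ 2 = ∑ t, w t - ∑ t with P t = 0, w t := by
  rw [← sum_filter_add_sum_filter_not univ (fun t => P t = 0) w, add_sub_cancel_left,
    ← sum_filter_add_sum_filter_not univ (fun t => P t = 0), sum_eq_zero fun t ht => by
      rw [(mem_filter.mp ht).2, quadraticChar_zero]; ring, zero_add]
  exact sum_congr rfl fun t ht => by rw [quadraticChar_sq_one (mem_filter.mp ht).2, mul_one]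

variable (hF : ringChar F ≠ 2)
include hF

theorem sum_quadraticChar_affine {a : F} (ha : a ≠ 0) (b : F) : ∑ x, χ (a * x + b) = 0 := by
  rw [sum_eq_of_eq_comp_affine ha b (ψ := χ) fun _ => rfl]
  exact quadraticChar_sum_zero hF

theorem card_roots_quadratic (b c : F) :
    (#{z : F | z ^ 2 + b * z + c = 0} : ℤ) = 1 + χ (b ^ 2 - 4 * c) := by
  have h2 : (2 : F) ≠ 0 := Ring.two_ne_zero hF
  have hsq : ∀ z : F, z ^ 2 + b * z + c = 0 ↔ (2 * z + b) ^ 2 = b ^ 2 - 4 * c := fun z => by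
    constructor
    · intro h; linear_combination 4 * h
    · intro h
      have : (2 : F) ^ 2 * (z ^ 2 + b * z + c) = 0 := by linear_combination h
      simpa [h2] using this
  have hsqrts := quadraticChar_card_sqrts hF (b ^ 2 - 4 * c)
  rw [Set.toFinset_ofPred] at hsqrts
  simp only [hsq, card_filter, Nat.cast_sum, Nat.cast_ite, Nat.cast_one, Nat.cast_zero]
    at hsqrts ⊢
  rw [sum_eq_of_eq_comp_affine h2 b
    (ψ := fun x => if x ^ 2 = b ^ 2 - 4 * c then (1 : ℤ) else 0) fun _ => rfl, hsqrts, add_comm]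

theorem sum_comp_sq_s7 (g : F → ℤ) : ∑ x, g (x ^ 2) = ∑ y, (1 + χ y) * g y := by
  rw [sum_comp_eq_sum_card_mul univ (· ^ 2) g]
  refine sum_congr rfl fun y _ => ?_
  have hsqrts := quadraticChar_card_sqrts hF y
  rw [Set.toFinset_ofPred] at hsqrts
  rw [hsqrts, add_comm]

theorem sum_quadraticChar_mul_sq_sub {a e : F} (ha : a ≠ 0) (he : e ≠ 0) :
    ∑ x, χ (a * (x ^ 2 - e)) = -χ a := by
  have hlin : ∑ y, χ (a * (y - e)) = 0 := by
    rw [← sum_quadraticChar_affine hF ha (-(a * e))]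
    exact sum_congr rfl fun y _ => congrArg χ (by ring)
  have hinv : ∑ y, χ (y * (a * (y - e))) = ∑ y, χ (-(a * e) * y⁻¹ + a) - χ a := by
    rw [sum_eq_sum_add_sub_of_forall_ne (0 : F) (ψ := fun y => χ (-(a * e) * y⁻¹ + a))
      fun y hy => quadraticChar_eq_of_eq_mul_sq hy (by field_simp; ring)]
    simp [sub_eq_add_neg]
  have hvanish : ∑ y, χ (-(a * e) * y⁻¹ + a) = 0 := by
    rw [Fintype.sum_bijective _ inv_involutive.bijective _ (fun y => χ (-(a * e) * y + a))
      fun _ => rfl]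
    exact sum_quadraticChar_affine hF (neg_ne_zero.mpr (mul_ne_zero ha he)) a
  rw [sum_comp_sq_s7 hF fun y => χ (a * (y - e))]
  simp only [add_mul, one_mul, ← map_mul, sum_add_distrib, hlin, hinv, hvanish]
  ring

theorem sum_quadraticChar_quadratic {a b c : F} (ha : a ≠ 0) (hd : b ^ 2 - 4 * a * c ≠ 0) :
    ∑ x, χ (a * x ^ 2 + b * x + c) = -χ a := by
  have h2 : (2 : F) ≠ 0 := Ring.two_ne_zero hF
  rw [sum_eq_of_eq_comp_affine one_ne_zero (b / (2 * a))
    (ψ := fun x => χ (a * (x ^ 2 - (b ^ 2 - 4 * a * c) / (2 * a) ^ 2)))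
    fun x => congrArg χ (by field_simp; ring)]
  exact sum_quadraticChar_mul_sq_sub hF ha (div_ne_zero hd (pow_ne_zero 2 (mul_ne_zero h2 ha)))

theorem sum_comp_add_inv (g : F → ℤ) :
    ∑ x ∈ univ.erase (0 : F), g (x + x⁻¹) = ∑ u, (1 + χ (u ^ 2 - 4)) * g u := by
  rw [sum_comp_eq_sum_card_mul]
  refine sum_congr rfl fun u _ => ?_
  have hfiber : {x ∈ univ.erase (0 : F) | x + x⁻¹ = u}
      = ({x | x ^ 2 + -u * x + 1 = 0} : Finset F) := by
    ext x
    simp only [mem_filter, mem_erase, mem_univ, and_true, true_and]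
    constructor
    · rintro ⟨hx, rfl⟩
      field_simp
      ring
    · intro hx
      have hx0 : x ≠ 0 := by rintro rfl; simp at hx
      refine ⟨hx0, ?_⟩
      field_simp
      linear_combination hx
  rw [hfiber, card_roots_quadratic hF]
  ring_nf

theorem sum_quadraticChar_of_eq_add_inv {f P : F → F}
    (h : ∀ x ≠ 0, χ (f x) = χ (P (x + x⁻¹))) :
    ∑ x, χ (f x) = χ (f 0) + ∑ u, χ (P u) + ∑ u, χ ((u ^ 2 - 4) * P u) := by
  rw [← add_sum_erase _ _ (mem_univ 0), sum_congr rfl fun x hx => h x (ne_of_mem_erase hx),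
    sum_comp_add_inv hF fun u => χ (P u)]
  simp only [add_mul, one_mul, ← map_mul, sum_add_distrib, add_assoc]

theorem sum_roots_sq_add_add_one {w : F → ℤ} {k : ℤ} (h : ∀ t, t ^ 2 + t + 1 = 0 → w t = k) :
    ∑ t with t ^ 2 + t + 1 = 0, w t = k * (1 + χ (-3)) := by
  have hroots := card_roots_quadratic hF 1 1
  simp only [one_mul, one_pow] at hroots
  rw [sum_congr rfl fun t ht => h t (mem_filter.mp ht).2, sum_const, nsmul_eq_mul, hroots]
  norm_num [mul_comm]

end QuadraticCharSums

section SpecialSums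

variable {F : Type*} [Field F] [Fintype F] [DecidableEq F] (hF : ringChar F ≠ 2)
include hF

local notation "χ" => quadraticChar F
local notation "λ₁" => ∑ x : F, χ (x * (x + 1) * (x - 3))

theorem sum_quadraticChar_mul_sq_add_add_one : ∑ t, χ (t * (t ^ 2 + t + 1)) = λ₁ := by
  have hlin : ∑ u, χ (u + 1) = 0 := by
    rw [← sum_quadraticChar_affine hF one_ne_zero 1]
    simp
  rw [sum_quadraticChar_of_eq_add_inv hF (P := fun u => u + 1) fun x hx =>
    quadraticChar_eq_of_eq_mul_sq hx (by field_simp; ring)]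
  simp only [zero_mul, quadraticChar_zero, hlin, zero_add]
  exact Fintype.sum_equiv (Equiv.addRight 1) _ _ fun u => congrArg χ (by simp; ring)

theorem sum_quadraticChar_isogenous_cubic (h3 : (3 : F) ≠ 0) :
    ∑ u, χ ((u - 2) * (u + 1) * (-3 * u - 2)) = λ₁ := by
  have hlin : ∑ u, χ (10 - 3 * u) = 0 := by
    rw [← sum_quadraticChar_affine hF (neg_ne_zero.mpr h3) 10]
    exact sum_congr rfl fun u _ => congrArg χ (by ring)
  have h4 : (4 : F) ≠ 0 := by
    simpa [show (4 : F) = 2 ^ 2 by norm_num] using Ring.two_ne_zero hF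
  have hmoebius : ∑ u, χ ((u ^ 2 - 4) * (10 - 3 * u)) = λ₁ := by
    rw [sum_eq_of_comp_inv_affine (inv_ne_zero h4) 0 2
      (ψ := fun v => χ (v * (v + 1) * (v - 3))) fun v hv => ?_]
    · norm_num
    · have hv0 : v ≠ 0 := by simpa [h4] using hv
      have h8 : (8 : F) ≠ 0 := by
        simpa [show (8 : F) = 2 ^ 3 by norm_num] using Ring.two_ne_zero hF
      refine quadraticChar_eq_of_eq_mul_sq (y := 8 / v ^ 2) (by simp [hv0, h8]) ?_
      rw [add_zero, mul_inv, inv_inv]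
      field_simp
      ring
  calc ∑ u, χ ((u - 2) * (u + 1) * (-3 * u - 2))
      = ∑ x, χ (x * (x - 3) * (1 - 3 * x)) :=
        Fintype.sum_equiv (Equiv.addRight 1) _ _ fun u => congrArg χ (by simp; ring)
    _ = λ₁ := by
        rw [sum_quadraticChar_of_eq_add_inv hF (P := fun u => 10 - 3 * u) fun x hx =>
          quadraticChar_eq_of_eq_mul_sq hx (by field_simp; ring)]
        simp only [zero_mul, quadraticChar_zero, hlin, zero_add, hmoebius]

theorem sum_quadraticChar_quintic (h3 : (3 : F) ≠ 0) :
    ∑ t, χ (t * (t ^ 2 + t + 1) * (-3 * t ^ 2 - 2 * t - 3)) = 2 * λ₁ := by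
  have h2 : (2 : F) ≠ 0 := Ring.two_ne_zero hF
  have h4 : (4 : F) ≠ 0 := by simpa [show (2 : F) ^ 2 = 4 by norm_num] using pow_ne_zero 2 h2
  have hχ4 : χ 4 = 1 := by simpa [show (2 : F) ^ 2 = 4 by norm_num] using quadraticChar_sq_one' h2
  have hχ16 : χ 16 = 1 := by
    simpa [show (4 : F) ^ 2 = 16 by norm_num] using quadraticChar_sq_one' h4
  -- `(t + 1) ^ 2 = t * (u + 2)` for `u = t + t⁻¹` makes the sum palindromic after this twist
  have htwist : ∑ t, χ (t * (t ^ 2 + t + 1) * (-3 * t ^ 2 - 2 * t - 3))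
      = ∑ t, χ (t * (t + 1) ^ 2 * (t ^ 2 + t + 1) * (-3 * t ^ 2 - 2 * t - 3)) + 1 := by
    rw [sum_eq_sum_add_sub_of_forall_ne (-1)
      (ψ := fun t => χ (t * (t + 1) ^ 2 * (t ^ 2 + t + 1) * (-3 * t ^ 2 - 2 * t - 3)))
      fun t ht => (quadraticChar_eq_of_eq_mul_sq (y := t + 1)
        (fun h => ht (by linear_combination h)) (by ring)).symm]
    norm_num [hχ4]
  have hlin : ∑ u, χ ((u + 2) * (u + 1) * (-3 * u - 2)) = λ₁ :=
    (sum_eq_of_eq_comp_affine (a := -3⁻¹) (by simpa using h3) (-1)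
      (φ := fun x => χ (x * (x + 1) * (x - 3)))
      (ψ := fun u => χ ((u + 2) * (u + 1) * (-3 * u - 2))) fun x =>
        quadraticChar_eq_of_eq_mul_sq (y := 3) h3 (by field_simp; ring)).symm
  have hiso : ∑ u, χ ((u ^ 2 - 4) * ((u + 2) * (u + 1) * (-3 * u - 2))) = λ₁ - 1 := by
    rw [sum_eq_sum_add_sub_of_forall_ne (-2) (ψ := fun u => χ ((u - 2) * (u + 1) * (-3 * u - 2)))
      fun u hu => quadraticChar_eq_of_eq_mul_sq (y := u + 2)
        (fun h => hu (by linear_combination h)) (by ring),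
      sum_quadraticChar_isogenous_cubic hF h3]
    norm_num [hχ16]
    ring
  rw [htwist, sum_quadraticChar_of_eq_add_inv hF
    (f := fun t => t * (t + 1) ^ 2 * (t ^ 2 + t + 1) * (-3 * t ^ 2 - 2 * t - 3))
    (P := fun u => (u + 2) * (u + 1) * (-3 * u - 2))
    fun x hx => quadraticChar_eq_of_eq_mul_sq (y := x ^ 2) (pow_ne_zero 2 hx)
      (by field_simp; ring), hlin, hiso]
  simp
  ring

theorem sum_quadraticChar_cubic_sub_quartic (h3 : (3 : F) ≠ 0) :
    ∑ t, χ (t * (-3 * t ^ 2 - 2 * t - 3))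
      - ∑ t, χ ((t ^ 2 + t + 1) * (-3 * t ^ 2 - 2 * t - 3)) = χ (-3) := by
  have hlin : ∑ u, χ (-3 * u - 2) = 0 := by
    rw [← sum_quadraticChar_affine hF (neg_ne_zero.mpr h3) (-2)]
    exact sum_congr rfl fun u _ => congrArg χ (by ring)
  have hquad : ∑ u, χ ((u + 1) * (-3 * u - 2)) = -χ (-3) := by
    rw [← sum_quadraticChar_quadratic hF (a := -3) (b := -5) (c := -2) (neg_ne_zero.mpr h3)
      (by norm_num)]
    exact sum_congr rfl fun u _ => congrArg χ (by ring)
  have hmoebius : ∑ u, χ ((u ^ 2 - 4) * (-3 * u - 2))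
      = ∑ v, χ ((v ^ 2 - 4) * ((v + 1) * (-3 * v - 2))) + χ (-3) := by
    rw [sum_eq_of_comp_inv_affine one_ne_zero 1 (-1)
      (φ := fun u => χ ((u ^ 2 - 4) * (-3 * u - 2)))
      (ψ := fun v => χ ((v ^ 2 - 4) * ((v + 1) * (-3 * v - 2)))) fun v hv => by
        rw [one_mul] at hv ⊢
        exact quadraticChar_eq_of_eq_mul_sq (y := (v + 1)⁻¹ ^ 2) (by simpa using hv)
          (by field_simp; ring)]
    norm_num
  rw [sum_quadraticChar_of_eq_add_inv hF (f := fun t => t * (-3 * t ^ 2 - 2 * t - 3))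
      (P := fun u => -3 * u - 2) fun x hx =>
      quadraticChar_eq_of_eq_mul_sq hx (by field_simp; ring),
    sum_quadraticChar_of_eq_add_inv hF (f := fun t => (t ^ 2 + t + 1) * (-3 * t ^ 2 - 2 * t - 3))
      (P := fun u => (u + 1) * (-3 * u - 2)) fun x hx =>
      quadraticChar_eq_of_eq_mul_sq hx (by field_simp; ring),
    hlin, hquad, hmoebius]
  norm_num

end SpecialSums

section Conic

variable {F : Type*} [Field F] [Fintype F] [DecidableEq F]

local notation "χ" => quadraticChar F

variable (F) in
def conicPoints : Finset (F × F × F) :=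
  {y | y.1 + y.2.1 + y.2.2 + 1 = 0 ∧ y.1 ^ 2 + y.2.1 ^ 2 + y.2.2 ^ 2 + 1 = 0}

theorem mem_conicPoints {y : F × F × F} : y ∈ conicPoints F ↔
    y.1 + y.2.1 + y.2.2 + 1 = 0 ∧ y.1 ^ 2 + y.2.1 ^ 2 + y.2.2 ^ 2 + 1 = 0 := by
  simp [conicPoints]

variable (F) in
def conicMoment (a b c : ℕ) : ℤ :=
  ∑ y ∈ conicPoints F, χ y.1 ^ a * χ y.2.1 ^ b * χ y.2.2 ^ c

theorem conicMoment_swap_left (a b c : ℕ) : conicMoment F a b c = conicMoment F b a c := by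
  have hmem : ∀ y ∈ (conicPoints F : Set (F × F × F)), (y.2.1, y.1, y.2.2) ∈ conicPoints F :=
    fun y hy => by
      obtain ⟨h1, h2⟩ := mem_conicPoints.mp hy
      exact mem_conicPoints.mpr ⟨by linear_combination h1, by linear_combination h2⟩
  exact sum_nbij' _ _ hmem hmem (fun _ _ => rfl) (fun _ _ => rfl) fun _ _ => by ring

theorem conicMoment_swap_right (a b c : ℕ) : conicMoment F a b c = conicMoment F a c b := by
  have hmem : ∀ y ∈ (conicPoints F : Set (F × F × F)), (y.1, y.2.2, y.2.1) ∈ conicPoints F :=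
    fun y hy => by
      obtain ⟨h1, h2⟩ := mem_conicPoints.mp hy
      exact mem_conicPoints.mpr ⟨by linear_combination h1, by linear_combination h2⟩
  exact sum_nbij' _ _ hmem hmem (fun _ _ => rfl) (fun _ _ => rfl) fun _ _ => by ring

variable (hF : ringChar F ≠ 2)
include hF

theorem mul_eq_of_mem_conicPoints {y : F × F × F} (hy : y ∈ conicPoints F) :
    y.1 * y.2.1 = y.2.2 ^ 2 + y.2.2 + 1 := by
  obtain ⟨h1, h2⟩ := mem_conicPoints.mp hy
  have h : (2 : F) * (y.1 * y.2.1 - (y.2.2 ^ 2 + y.2.2 + 1)) = 0 := by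
    linear_combination (y.1 + y.2.1 - y.2.2 - 1) * h1 - h2
  exact sub_eq_zero.mp ((mul_eq_zero.mp h).resolve_left (Ring.two_ne_zero hF))

theorem card_conicPoints_fiber (t : F) :
    (#{y ∈ conicPoints F | y.2.2 = t} : ℤ) = 1 + χ (-3 * t ^ 2 - 2 * t - 3) := by
  have hfiber : #{y ∈ conicPoints F | y.2.2 = t}
      = #{z : F | z ^ 2 + (1 + t) * z + (t ^ 2 + t + 1) = 0} := by
    refine card_nbij' (·.1) (fun z => (z, -1 - z - t, t)) (fun y hy => ?_) (fun z hz => ?_)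
      (fun y hy => ?_) (fun _ _ => rfl)
    · obtain ⟨hyc, rfl⟩ := mem_filter.mp hy
      obtain ⟨h1, -⟩ := mem_conicPoints.mp hyc
      have h := mul_eq_of_mem_conicPoints hF hyc
      simp only [coe_filter, mem_univ, true_and, Set.mem_ofPred_eq]
      linear_combination y.1 * h1 - h
    · simp only [coe_filter, mem_univ, true_and, Set.mem_ofPred_eq] at hz
      refine mem_filter.mpr ⟨mem_conicPoints.mpr ⟨by ring, by linear_combination 2 * hz⟩, rfl⟩
    · obtain ⟨hyc, rfl⟩ := mem_filter.mp hy
      obtain ⟨h1, -⟩ := mem_conicPoints.mp hyc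
      ext <;> simp only
      linear_combination -h1
  rw [hfiber, card_roots_quadratic hF]
  ring_nf

theorem conicMoment_eq_sum (e c : ℕ) : conicMoment F e e c
    = ∑ t, (1 + χ (-3 * t ^ 2 - 2 * t - 3)) * (χ (t ^ 2 + t + 1) ^ e * χ t ^ c) := by
  unfold conicMoment
  rw [sum_congr rfl fun y hy => show χ y.1 ^ e * χ y.2.1 ^ e * χ y.2.2 ^ c
      = χ (y.2.2 ^ 2 + y.2.2 + 1) ^ e * χ y.2.2 ^ c by
    rw [← mul_pow, ← map_mul, mul_eq_of_mem_conicPoints hF hy],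
    sum_comp_eq_sum_card_mul (conicPoints F) (·.2.2) fun t => χ (t ^ 2 + t + 1) ^ e * χ t ^ c]
  exact sum_congr rfl fun t _ => by rw [card_conicPoints_fiber hF]

theorem sum_roots_sq_add_add_one_conic_discr {g : F → ℤ}
    (hg : ∀ t, t ^ 2 + t + 1 = 0 → g t = 1) :
    ∑ t with t ^ 2 + t + 1 = 0, (1 + χ (-3 * t ^ 2 - 2 * t - 3)) * g t = 2 * (1 + χ (-3)) :=
  sum_roots_sq_add_add_one hF fun t ht => by
    rw [show -3 * t ^ 2 - 2 * t - 3 = t by linear_combination -3 * ht,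
      quadraticChar_eq_one_of_sq_add_add_one ht, hg t ht]
    norm_num

theorem conicMoment_two_two_two (h3 : (3 : F) ≠ 0) :
    conicMoment F 2 2 2 = Fintype.card F - χ (-3) - 3 * (1 + χ (-3)) := by
  have hdiscr : ∑ t, χ (-3 * t ^ 2 - 2 * t - 3) = -χ (-3) := by
    have h32 : (-2 : F) ^ 2 - 4 * -3 * -3 = -2 ^ 5 := by norm_num
    rw [← sum_quadraticChar_quadratic hF (a := -3) (b := -2) (c := -3) (neg_ne_zero.mpr h3)
      (by rw [h32]; exact neg_ne_zero.mpr (pow_ne_zero 5 (Ring.two_ne_zero hF)))]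
    exact sum_congr rfl fun t _ => congrArg χ (by ring)
  have hroots := sum_roots_sq_add_add_one_conic_discr hF (g := 1) fun _ _ => rfl
  simp only [Pi.one_apply, mul_one] at hroots
  rw [conicMoment_eq_sum hF]
  simp_rw [← mul_assoc]
  rw [sum_mul_quadraticChar_sq _ fun t => t, sum_mul_quadraticChar_sq _ fun t => t ^ 2 + t + 1,
    hroots, sum_add_distrib, hdiscr]
  simp [filter_eq']
  ring

theorem conicMoment_two_two_one :
    conicMoment F 2 2 1 = ∑ t, χ (t * (-3 * t ^ 2 - 2 * t - 3)) - 2 * (1 + χ (-3)) := by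
  rw [conicMoment_eq_sum hF, sum_congr rfl fun t _ =>
    show (1 + χ (-3 * t ^ 2 - 2 * t - 3)) * (χ (t ^ 2 + t + 1) ^ 2 * χ t ^ 1)
      = (χ t + χ (t * (-3 * t ^ 2 - 2 * t - 3))) * χ (t ^ 2 + t + 1) ^ 2 by rw [map_mul]; ring,
    sum_mul_quadraticChar_sq, sum_add_distrib, quadraticChar_sum_zero hF,
    ← sum_roots_sq_add_add_one_conic_discr hF fun t ht =>
      quadraticChar_eq_one_of_sq_add_add_one ht]
  congr 1
  · ring
  · exact sum_congr rfl fun t _ => by rw [map_mul]; ring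

theorem conicMoment_one_one_two (h3 : (3 : F) ≠ 0) : conicMoment F 1 1 2
    = ∑ t, χ ((t ^ 2 + t + 1) * (-3 * t ^ 2 - 2 * t - 3)) - 2 - χ (-3) := by
  have hC : ∑ t, χ (t ^ 2 + t + 1) = -1 := by
    simpa using sum_quadraticChar_quadratic hF (a := 1) (b := 1) (c := 1) one_ne_zero
      (by norm_num [h3])
  rw [conicMoment_eq_sum hF, sum_congr rfl fun t _ =>
    show (1 + χ (-3 * t ^ 2 - 2 * t - 3)) * (χ (t ^ 2 + t + 1) ^ 1 * χ t ^ 2)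
      = (χ (t ^ 2 + t + 1) + χ ((t ^ 2 + t + 1) * (-3 * t ^ 2 - 2 * t - 3))) * χ t ^ 2 by
        rw [map_mul]; ring,
    sum_mul_quadraticChar_sq _ fun t => t, sum_add_distrib, hC]
  norm_num [filter_eq']
  ring

theorem conicMoment_one_one_one (h3 : (3 : F) ≠ 0) :
    conicMoment F 1 1 1 = 3 * ∑ x : F, χ (x * (x + 1) * (x - 3)) := by
  rw [conicMoment_eq_sum hF, sum_congr rfl fun t _ =>
    show (1 + χ (-3 * t ^ 2 - 2 * t - 3)) * (χ (t ^ 2 + t + 1) ^ 1 * χ t ^ 1)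
      = χ (t * (t ^ 2 + t + 1)) + χ (t * (t ^ 2 + t + 1) * (-3 * t ^ 2 - 2 * t - 3)) by
        simp only [map_mul]; ring,
    sum_add_distrib, sum_quadraticChar_mul_sq_add_add_one hF, sum_quadraticChar_quintic hF h3]
  ring

end Conic

section Count

variable {F : Type*} [Field F] [Fintype F] [DecidableEq F]

local notation "χ" => quadraticChar F

theorem eight_mul_card_conicPoints_filter :
    8 * (#{y ∈ conicPoints F | χ y.1 = 1 ∧ χ y.2.1 = 1 ∧ χ y.2.2 = -1} : ℤ)
      = conicMoment F 2 2 2 + conicMoment F 2 2 1 - conicMoment F 1 1 2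
        - conicMoment F 1 1 1 := by
  have hindicator : ∀ y : F × F × F,
      (if χ y.1 = 1 ∧ χ y.2.1 = 1 ∧ χ y.2.2 = -1 then (8 : ℤ) else 0)
        = (χ y.1 ^ 2 + χ y.1) * (χ y.2.1 ^ 2 + χ y.2.1) * (χ y.2.2 ^ 2 - χ y.2.2) := fun y => by
    rcases quadraticChar_isQuadratic F y.1 with h1 | h1 | h1 <;>
    rcases quadraticChar_isQuadratic F y.2.1 with h2 | h2 | h2 <;>
    rcases quadraticChar_isQuadratic F y.2.2 with h3 | h3 | h3 <;> simp [h1, h2, h3]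
  have hexpand : 8 * (#{y ∈ conicPoints F | χ y.1 = 1 ∧ χ y.2.1 = 1 ∧ χ y.2.2 = -1} : ℤ)
      = conicMoment F 2 2 2 - conicMoment F 2 2 1 + conicMoment F 2 1 2 - conicMoment F 2 1 1
        + conicMoment F 1 2 2 - conicMoment F 1 2 1 + conicMoment F 1 1 2
        - conicMoment F 1 1 1 := by
    rw [card_filter, Nat.cast_sum, mul_sum]
    simp only [conicMoment, ← sum_add_distrib, ← sum_sub_distrib]
    refine sum_congr rfl fun y _ => ?_
    have h := hindicator y
    split_ifs at h ⊢ <;> push_cast <;> linear_combination h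
  rw [hexpand, conicMoment_swap_right 2 1 2, conicMoment_swap_left 1 2 2,
    conicMoment_swap_right 2 1 2, conicMoment_swap_left 2 1 1, conicMoment_swap_right 1 2 1]
  ring

end Count

theorem stmt7_general (p n : ℕ) (hp : p.Prime) (hp2 : p ≠ 2) (hp3 : p ≠ 3)
    (F : Type*) [Field F] [Fintype F] [DecidableEq F]
    (hcard : Fintype.card F = p ^ n) :
    (8 : ℤ) * Nat.card {y : F × F × F //
        (y.1 ≠ 0 ∧ y.2.1 ≠ 0 ∧ y.2.2 ≠ 0) ∧ (y.1 + y.2.1 + y.2.2 + 1 = 0 ∧ y.1 ^ 2 + y.2.1 ^ 2 + y.2.2 ^ 2 + 1 = 0) ∧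
        quadraticChar F y.1 = 1 ∧ quadraticChar F y.2.1 = 1 ∧ quadraticChar F y.2.2 = -1} =
      (p ^ n : ℤ) - 3 * (∑ x : F, quadraticChar F (x * (x + 1) * (x - 3))) - 3 - 4 * quadraticChar F (-3) := by
  have := Fact.mk hp
  have := charP_of_card_eq_prime_pow (R := F) hcard
  have hF : ringChar F ≠ 2 := by rwa [ringChar.eq F p]
  have h3 : (3 : F) ≠ 0 := fun h => hp3 <| (Nat.prime_dvd_prime_iff_eq hp Nat.prime_three).mp <|
    (CharP.cast_eq_zero_iff F p 3).mp (by exact_mod_cast h)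
  have hvalue : 8 * (#{y ∈ conicPoints F | quadraticChar F y.1 = 1 ∧ quadraticChar F y.2.1 = 1
      ∧ quadraticChar F y.2.2 = -1} : ℤ)
      = (p ^ n : ℤ) - 3 * (∑ x : F, quadraticChar F (x * (x + 1) * (x - 3))) - 3
        - 4 * quadraticChar F (-3) := by
    rw [eight_mul_card_conicPoints_filter, conicMoment_two_two_two hF h3,
      conicMoment_two_two_one hF, conicMoment_one_one_two hF h3, conicMoment_one_one_one hF h3,
      hcard]
    push_cast
    linear_combination sum_quadraticChar_cubic_sub_quartic hF h3
  rw [← hvalue, Nat.card_eq_fintype_card, Fintype.card_subtype, conicPoints, filter_filter]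
  congr 3
  ext y
  simp only [mem_filter, mem_univ, true_and]
  refine ⟨fun ⟨_, he, hχ⟩ => ⟨he, hχ⟩, fun ⟨he, h1, h2, h3⟩ => ⟨⟨?_, ?_, ?_⟩, he, h1, h2, h3⟩⟩ <;>
    rintro h0 <;> simp [h0] at h1 h2 h3

theorem stmt7 (p n : ℕ) (hp : p.Prime) (hp2 : p ≠ 2) (hp3 : p ≠ 3) (hn : 0 < n)
    (F : Type*) [Field F] [Fintype F] [DecidableEq F]
    (hcard : Fintype.card F = p ^ n) (hq : p ^ n % 4 = 3) :
    (8 : ℤ) * Nat.card {y : F × F × F //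
        (y.1 ≠ 0 ∧ y.2.1 ≠ 0 ∧ y.2.2 ≠ 0) ∧ (y.1 + y.2.1 + y.2.2 + 1 = 0 ∧ y.1 ^ 2 + y.2.1 ^ 2 + y.2.2 ^ 2 + 1 = 0) ∧
        quadraticChar F y.1 = 1 ∧ quadraticChar F y.2.1 = 1 ∧ quadraticChar F y.2.2 = -1} =
      (p ^ n : ℤ) - 3 * (∑ x : F, quadraticChar F (x * (x + 1) * (x - 3))) - 3 - 4 * quadraticChar F (-3) :=
  stmt7_general p n hp hp2 hp3 F hcard
end

section
/- Let q = p^n ≡ 3 (mod 4) be an odd prime power with p ≠ 3, let d = (q+3)/2, and χ the quadratic character of 𝔽_q. The number of solutions (y₁, y₂, y₃) ∈ (𝔽_q*)³ of the system y₁+y₂+y₃+1 = 0 and y₁^d+y₂^d+y₃^d+1 = 0 with χ(y₁) = 1 and χ(y₂) = χ(y₃) = −1 equals q − 2. -/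
open Finset

theorem stmt11 (p n : ℕ) (hp : p.Prime) (hp2 : p ≠ 2) (hp3 : p ≠ 3) (hn : 0 < n)
    (F : Type*) [Field F] [Fintype F] [DecidableEq F]
    (hcard : Fintype.card F = p ^ n) (hq : p ^ n % 4 = 3) :
    (Nat.card {y : F × F × F //
        (y.1 ≠ 0 ∧ y.2.1 ≠ 0 ∧ y.2.2 ≠ 0) ∧ (y.1 + y.2.1 + y.2.2 + 1 = 0 ∧
        y.1 ^ ((p ^ n + 3) / 2) + y.2.1 ^ ((p ^ n + 3) / 2) + y.2.2 ^ ((p ^ n + 3) / 2) + 1 = 0) ∧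
        quadraticChar F y.1 = 1 ∧ quadraticChar F y.2.1 = -1 ∧ quadraticChar F y.2.2 = -1} : ℤ) =
      (p ^ n : ℤ) - 2 := by
  have hqodd : p ^ n % 2 = 1 := by omega
  have hF2 : ringChar F ≠ 2 := by
    intro h
    have := FiniteField.even_card_of_char_two h
    rw [hcard] at this
    omega
  have h2F : (2 : F) ≠ 0 := Ring.two_ne_zero hF2
  have hχm1 : quadraticChar F (-1) = -1 := by
    rw [quadraticChar_neg_one_iff_not_isSquare, FiniteField.isSquare_neg_one_iff, hcard]
    simp [hq]
  have hd : (p ^ n + 3) / 2 = Fintype.card F / 2 + 2 := by rw [hcard]; omega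
  have hpow : ∀ y : F, y ^ ((p ^ n + 3) / 2) = (quadraticChar F y : F) * y ^ 2 := by
    intro y
    rw [hd, pow_add, quadraticChar_eq_pow_of_char_ne_two' hF2]
  set P : F × F × F → Prop := fun y =>
      (y.1 ≠ 0 ∧ y.2.1 ≠ 0 ∧ y.2.2 ≠ 0) ∧ (y.1 + y.2.1 + y.2.2 + 1 = 0 ∧
        y.1 ^ ((p ^ n + 3) / 2) + y.2.1 ^ ((p ^ n + 3) / 2) + y.2.2 ^ ((p ^ n + 3) / 2) + 1 = 0) ∧
        quadraticChar F y.1 = 1 ∧ quadraticChar F y.2.1 = -1 ∧ quadraticChar F y.2.2 = -1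
    with hP
  set A : Finset F := univ.filter (fun a => quadraticChar F a = 1) with hA
  have hA0 : ∀ a ∈ A, a ≠ 0 := by
    intro a ha h0
    simp only [hA, mem_filter] at ha
    rw [h0] at ha
    simp at ha
  have hAval : ∀ a ∈ A, quadraticChar F a = 1 := by
    intro a ha; simp only [hA, mem_filter] at ha; exact ha.2
  have hone : (1 : F) ∈ A := by simp [hA]
  have hχneg : ∀ a ∈ A, quadraticChar F (-a) = -1 := by
    intro a ha
    have : (-a) = (-1) * a := by ring
    rw [this, map_mul, hχm1, hAval a ha]
    ring
  -- characterisation of solutions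
  have hchar : ∀ y : F × F × F, P y ↔
      (∃ a ∈ A, y = (a, -1, -a)) ∨ (∃ a ∈ A, y = (a, -a, -1)) := by
    rintro ⟨y₁, y₂, y₃⟩
    constructor
    · rintro ⟨⟨h1, h2, h3⟩, ⟨e1, e2⟩, c1, c2, c3⟩
      rw [hpow, hpow, hpow, c1, c2, c3] at e2
      push_cast at e2
      have hy1A : y₁ ∈ A := Finset.mem_filter.mpr ⟨Finset.mem_univ _, c1⟩
      have key : 2 * ((1 + y₂) * (1 + y₃)) = 0 := by
        linear_combination e2 + (1 + y₂ + y₃ - y₁) * e1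
      rcases mul_eq_zero.mp ((mul_eq_zero.mp key).resolve_left h2F) with h | h
      · left
        exact ⟨y₁, hy1A, by
          have hy2 : y₂ = -1 := by linear_combination h
          have hy3 : y₃ = -y₁ := by linear_combination e1 - hy2
          simp [hy2, hy3]⟩
      · right
        exact ⟨y₁, hy1A, by
          have hy3 : y₃ = -1 := by linear_combination h
          have hy2 : y₂ = -y₁ := by linear_combination e1 - hy3
          simp [hy2, hy3]⟩
    · have build : ∀ a ∈ A, P (a, -1, -a) := by
        intro a ha
        have ha0 := hA0 a ha
        refine ⟨⟨ha0, by simp, by simpa using ha0⟩, ⟨by ring, ?_⟩, hAval a ha, hχm1, hχneg a ha⟩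
        rw [hpow, hpow, hpow, hAval a ha, hχm1, hχneg a ha]
        push_cast
        ring
      have build' : ∀ a ∈ A, P (a, -a, -1) := by
        intro a ha
        have ha0 := hA0 a ha
        refine ⟨⟨ha0, by simpa using ha0, by simp⟩, ⟨by ring, ?_⟩, hAval a ha, hχneg a ha, hχm1⟩
        rw [hpow, hpow, hpow, hAval a ha, hχm1, hχneg a ha]
        push_cast
        ring
      rintro (⟨a, ha, h⟩ | ⟨a, ha, h⟩)
      · rw [h]; exact build a ha
      · rw [h]; exact build' a ha
  -- counting A : 2 * #A = q - 1
  have hcardA : 2 * A.card = p ^ n - 1 := by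
    have hsum : ∑ a : F, ((quadraticChar F a : ℤ) ^ 2 + quadraticChar F a)
        = 2 * A.card := by
      rw [← Finset.sum_filter_add_sum_filter_not univ (fun a => quadraticChar F a = 1)]
      have hl : ∑ a ∈ univ.filter (fun a => quadraticChar F a = 1),
          ((quadraticChar F a : ℤ) ^ 2 + quadraticChar F a) = 2 * A.card := by
        calc ∑ a ∈ univ.filter (fun a => quadraticChar F a = 1),
            ((quadraticChar F a : ℤ) ^ 2 + quadraticChar F a)
            = ∑ _a ∈ A, (2 : ℤ) := by
              refine Finset.sum_congr rfl (fun a ha => ?_)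
              rw [hAval a ha]; norm_num
          _ = 2 * A.card := by rw [Finset.sum_const]; push_cast; ring
      have hr : ∑ a ∈ univ.filter (fun a => ¬ quadraticChar F a = 1),
          ((quadraticChar F a : ℤ) ^ 2 + quadraticChar F a) = 0 := by
        apply Finset.sum_eq_zero
        intro a ha
        simp only [mem_filter] at ha
        by_cases h0 : a = 0
        · rw [h0]; simp
        · have := (quadraticChar_dichotomy h0).resolve_left ha.2
          rw [this]; norm_num
      rw [hl, hr, add_zero]
    have hsq : ∑ a : F, ((quadraticChar F a : ℤ) ^ 2) = ((p ^ n : ℕ) : ℤ) - 1 := by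
      rw [← Finset.sum_erase_add univ _ (mem_univ (0 : F))]
      have hcon : ∑ a ∈ univ.erase (0 : F), ((quadraticChar F a : ℤ) ^ 2)
          = ∑ _a ∈ univ.erase (0 : F), (1 : ℤ) := by
        refine Finset.sum_congr rfl (fun a ha => ?_)
        exact_mod_cast congrArg (Int.cast : ℤ → ℤ)
          (quadraticChar_sq_one (Finset.ne_of_mem_erase ha))
      rw [hcon, Finset.sum_const, Finset.card_erase_of_mem (mem_univ _), Finset.card_univ, hcard]
      have h1 : 1 ≤ p ^ n := by omega
      simp only [quadraticChar_zero, Int.cast_zero, ne_eq, nsmul_eq_mul, mul_one, add_zero, smul_eq_mul]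
      rw [Nat.cast_sub h1]
      push_cast
      ring
    have hs0 : ∑ a : F, (quadraticChar F a : ℤ) = 0 := by
      exact_mod_cast quadraticChar_sum_zero hF2
    have hfinal : (2 * A.card : ℤ) = ((p ^ n : ℕ) : ℤ) - 1 := by
      rw [← hsum, Finset.sum_add_distrib, hsq, hs0, add_zero]
    omega
  -- the two images
  set f : F → F × F × F := fun a => (a, -1, -a) with hf
  set g : F → F × F × F := fun a => (a, -a, -1) with hg
  have hfinj : Set.InjOn f A := fun a _ b _ h => congrArg Prod.fst h
  have hginj : Set.InjOn g A := fun a _ b _ h => congrArg Prod.fst h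
  have hfilter : univ.filter P = (A.image f) ∪ (A.image g) := by
    ext y
    simp only [mem_filter, mem_univ, true_and, mem_union, mem_image, hchar y]
    constructor
    · rintro (⟨a, ha, rfl⟩ | ⟨a, ha, rfl⟩)
      · exact Or.inl ⟨a, ha, rfl⟩
      · exact Or.inr ⟨a, ha, rfl⟩
    · rintro (⟨a, ha, rfl⟩ | ⟨a, ha, rfl⟩)
      · exact Or.inl ⟨a, ha, rfl⟩
      · exact Or.inr ⟨a, ha, rfl⟩
  have hinter : (A.image f) ∩ (A.image g) = {(1, -1, -1)} := by
    ext y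
    simp only [mem_inter, mem_image, mem_singleton]
    constructor
    · rintro ⟨⟨a, ha, rfl⟩, ⟨b, hb, hab⟩⟩
      simp only [hf, hg, Prod.mk.injEq] at hab
      obtain ⟨h1, h2, h3⟩ := hab
      have hb1 : b = 1 := by linear_combination -h2
      have ha1 : a = 1 := h1 ▸ hb1
      rw [ha1]
    · rintro rfl
      exact ⟨⟨1, hone, by simp [hf]⟩, ⟨1, hone, by simp [hg]⟩⟩
  have hcardf : (A.image f).card = A.card := Finset.card_image_of_injOn hfinj
  have hcardg : (A.image g).card = A.card := Finset.card_image_of_injOn hginj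
  have hcup : ((A.image f) ∪ (A.image g)).card + 1 = 2 * A.card := by
    have := Finset.card_union_add_card_inter (A.image f) (A.image g)
    rw [hinter, Finset.card_singleton, hcardf, hcardg] at this
    omega
  -- put it together
  have hNat : Nat.card {y : F × F × F // P y} = (univ.filter P).card := by
    classical
    rw [Nat.card_eq_fintype_card, Fintype.card_subtype]
  rw [show (Nat.card {y : F × F × F //
        (y.1 ≠ 0 ∧ y.2.1 ≠ 0 ∧ y.2.2 ≠ 0) ∧ (y.1 + y.2.1 + y.2.2 + 1 = 0 ∧
        y.1 ^ ((p ^ n + 3) / 2) + y.2.1 ^ ((p ^ n + 3) / 2) + y.2.2 ^ ((p ^ n + 3) / 2) + 1 = 0) ∧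
        quadraticChar F y.1 = 1 ∧ quadraticChar F y.2.1 = -1 ∧ quadraticChar F y.2.2 = -1})
      = Nat.card {y : F × F × F // P y} from rfl, hNat, hfilter]
  have h3 : 3 ≤ p ^ n := by omega
  have hfin : ((A.image f) ∪ (A.image g)).card = p ^ n - 2 := by omega
  rw [hfin]
  push_cast [show 2 ≤ p ^ n by omega]
  ring
end

section
/- Let q = p^n ≡ 3 (mod 4) be an odd prime power with p ≠ 3, d = (q+3)/2, and χ the quadratic character of 𝔽_q. The number of x ∈ 𝔽_q satisfying (x+1)^d − x^d = 1 equals 3 + χ(−3). -/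
theorem stmt14 (p n : ℕ) (hp : p.Prime) (hp2 : p ≠ 2) (hp3 : p ≠ 3) (hn : 0 < n)
    (F : Type*) [Field F] [Fintype F] [DecidableEq F]
    (hcard : Fintype.card F = p ^ n) (hq : p ^ n % 4 = 3) :
    (Nat.card {x : F // (x + 1) ^ ((p ^ n + 3) / 2) - x ^ ((p ^ n + 3) / 2) = 1} : ℤ) =
      3 + quadraticChar F (-3) := by
  -- characteristic facts
  have hcharp : CharP F (ringChar F) := ringChar.charP F
  have hrp : ringChar F = p := by
    obtain ⟨m, hrprime, hm⟩ := FiniteField.card F (ringChar F)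
    have hdvd : (ringChar F) ∣ p ^ n := by
      rw [← hcard, hm]; exact dvd_pow_self _ m.pos.ne'
    exact ((Nat.prime_dvd_prime_iff_eq hrprime hp).mp
      (hrprime.dvd_of_dvd_pow hdvd))
  have hcharP : CharP F p := hrp ▸ hcharp
  have hF2 : ringChar F ≠ 2 := by rw [hrp]; exact hp2
  have h2ne : (2 : F) ≠ 0 := by
    intro h
    have hd : p ∣ 2 := (CharP.cast_eq_zero_iff F p 2).mp (by exact_mod_cast h)
    exact hp2 ((Nat.prime_dvd_prime_iff_eq hp Nat.prime_two).mp hd)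
  have h3ne : (3 : F) ≠ 0 := by
    intro h
    have hd : p ∣ 3 := (CharP.cast_eq_zero_iff F p 3).mp (by exact_mod_cast h)
    exact hp3 ((Nat.prime_dvd_prime_iff_eq hp Nat.prime_three).mp hd)
  obtain ⟨k, hk⟩ : ∃ k, p ^ n = 4 * k + 3 := ⟨p ^ n / 4, by omega⟩
  have hdq : (p ^ n + 3) / 2 = p ^ n / 2 + 2 := by omega
  have powd : ∀ y : F, y ^ ((p ^ n + 3) / 2) = y ^ (p ^ n / 2) * y ^ 2 := by
    intro y; rw [hdq, pow_add]
  have hoddhalf : Odd (p ^ n / 2) := ⟨k, by omega⟩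
  have hodd_d : Odd ((p ^ n + 3) / 2) := ⟨k + 1, by omega⟩
  have sq_iff : ∀ y : F, y ≠ 0 → (IsSquare y ↔ y ^ (p ^ n / 2) = 1) := by
    intro y hy
    have := FiniteField.isSquare_iff hF2 hy
    rwa [hcard] at this
  have dich : ∀ y : F, y ≠ 0 → y ^ (p ^ n / 2) = 1 ∨ y ^ (p ^ n / 2) = -1 := by
    intro y hy
    have := FiniteField.pow_dichotomy hF2 hy
    rwa [hcard] at this
  have hone_ne : (1 : F) ≠ 0 := one_ne_zero
  -- main characterization
  have key : ∀ x : F, ((x + 1) ^ ((p ^ n + 3) / 2) - x ^ ((p ^ n + 3) / 2) = 1) ↔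
      (x = 0 ∨ x = -1 ∨ x ^ 2 + x + 1 = 0) := by
    intro x
    constructor
    · intro h
      by_cases h0 : x = 0
      · exact Or.inl h0
      by_cases h1 : x = -1
      · exact Or.inr (Or.inl h1)
      refine Or.inr (Or.inr ?_)
      have hx1 : x + 1 ≠ 0 := fun h' => h1 (by linear_combination h')
      rw [powd, powd] at h
      rcases dich x h0 with ha | ha <;> rcases dich (x + 1) hx1 with hb | hb <;>
        rw [ha, hb] at h
      · have h2x : (2 : F) * x = 0 := by linear_combination h
        rcases mul_eq_zero.mp h2x with h' | h'
        · exact absurd h' h2ne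
        · exact absurd h' h0
      · have h2x : (2 : F) * (x ^ 2 + x + 1) = 0 := by linear_combination -h
        rcases mul_eq_zero.mp h2x with h' | h'
        · exact absurd h' h2ne
        · exact h'
      · have h2x : (2 : F) * (x * (x + 1)) = 0 := by linear_combination h
        rcases mul_eq_zero.mp h2x with h' | h'
        · exact absurd h' h2ne
        · rcases mul_eq_zero.mp h' with h'' | h''
          · exact absurd h'' h0
          · exact absurd h'' hx1
      · have h2x : (2 : F) * (x + 1) = 0 := by linear_combination -h
        rcases mul_eq_zero.mp h2x with h' | h'
        · exact absurd h' h2ne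
        · exact absurd (show x = -1 by linear_combination h') h1
    · rintro (rfl | rfl | hroot)
      · rw [zero_pow (by omega), zero_add, one_pow]; ring
      · rw [show (-1 : F) + 1 = 0 by ring, zero_pow (by omega), hodd_d.neg_one_pow]; ring
      · have h0 : x ≠ 0 := by rintro rfl; simp at hroot
        have hx1 : x + 1 ≠ 0 := by
          intro h'
          have : x = -1 := by linear_combination h'
          rw [this] at hroot; norm_num at hroot
        have hsx : IsSquare x := ⟨x * x, by linear_combination (-x^2 + x) * hroot⟩
        have pa : x ^ (p ^ n / 2) = 1 := (sq_iff x h0).mp hsx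
        have pb : (x + 1) ^ (p ^ n / 2) = -1 := by
          have hx1e : x + 1 = (-1) * (x * x) := by linear_combination hroot
          rw [hx1e, mul_pow, mul_pow, pa, hoddhalf.neg_one_pow]; ring
        rw [powd, powd, pa, pb]; linear_combination (-2 : F) * hroot
  rw [Nat.card_congr (Equiv.subtypeEquivRight key)]
  by_cases hs : IsSquare (-3 : F)
  · obtain ⟨b, hb⟩ := hs
    have hbne : b ≠ 0 := by
      rintro rfl
      rw [mul_zero] at hb
      exact h3ne (by linear_combination -hb)
    have hfac : ∀ x : F, x ^ 2 + x + 1 = 0 ↔ (x = (b - 1) / 2 ∨ x = (-b - 1) / 2) := by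
      intro x
      have hx : x ^ 2 + x + 1 = (x - (b - 1) / 2) * (x - (-b - 1) / 2) := by
        field_simp
        ring_nf
        linear_combination -hb
      rw [hx, mul_eq_zero, sub_eq_zero, sub_eq_zero]
    have hr1 : ((b - 1) / 2) ^ 2 + (b - 1) / 2 + 1 = 0 := (hfac _).mpr (Or.inl rfl)
    have hr2 : ((-b - 1) / 2) ^ 2 + (-b - 1) / 2 + 1 = 0 := (hfac _).mpr (Or.inr rfl)
    have hset : ∀ x : F, (x = 0 ∨ x = -1 ∨ x ^ 2 + x + 1 = 0) ↔
        x ∈ ({0, -1, (b - 1) / 2, (-b - 1) / 2} : Finset F) := by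
      intro x
      simp [hfac, or_assoc]
    rw [Nat.card_congr (Equiv.subtypeEquivRight hset)]
    have hne01 : (0 : F) ≠ -1 := by
      intro h; exact one_ne_zero (by linear_combination h : (1:F) = 0)
    have hr10 : (b - 1) / 2 ≠ 0 := by intro h; rw [h] at hr1; norm_num at hr1
    have hr1m : (b - 1) / 2 ≠ -1 := by intro h; rw [h] at hr1; norm_num at hr1
    have hr20 : (-b - 1) / 2 ≠ 0 := by intro h; rw [h] at hr2; norm_num at hr2
    have hr2m : (-b - 1) / 2 ≠ -1 := by intro h; rw [h] at hr2; norm_num at hr2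
    have hr12 : (b - 1) / 2 ≠ (-b - 1) / 2 := by
      intro h
      have h2b : (2 : F) * b = 0 := by
        field_simp at h
        linear_combination h
      rcases mul_eq_zero.mp h2b with h' | h'
      · exact h2ne h'
      · exact hbne h'
    have hcard4 : ({0, -1, (b - 1) / 2, (-b - 1) / 2} : Finset F).card = 4 := by
      rw [Finset.card_insert_of_notMem (by simp [hne01, hr10.symm, hr20.symm]),
        Finset.card_insert_of_notMem (by simp [hr1m.symm, hr2m.symm]),
        Finset.card_insert_of_notMem (by simp [hr12]), Finset.card_singleton]
    rw [Nat.card_eq_finsetCard, hcard4,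
      (quadraticChar_one_iff_isSquare (by
        intro h; exact h3ne (by linear_combination -h))).mpr ⟨b, hb⟩]
    norm_num
  · have hnoroot : ∀ x : F, ¬(x ^ 2 + x + 1 = 0) := by
      intro x h
      exact hs ⟨2 * x + 1, by linear_combination (-4 : F) * h⟩
    have hset : ∀ x : F, (x = 0 ∨ x = -1 ∨ x ^ 2 + x + 1 = 0) ↔
        x ∈ ({0, -1} : Finset F) := by
      intro x
      simp [hnoroot x]
    rw [Nat.card_congr (Equiv.subtypeEquivRight hset)]
    have hne01 : (0 : F) ≠ -1 := by
      intro h; exact one_ne_zero (by linear_combination h : (1:F) = 0)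
    have : ({0, -1} : Finset F).card = 2 := by
      rw [Finset.card_insert_of_notMem (by simp [hne01]), Finset.card_singleton]
    rw [Nat.card_eq_finsetCard, this,
      quadraticChar_neg_one_iff_not_isSquare.mpr hs]
    norm_num
end

section
/- Let q = p^n ≡ 3 (mod 4) be an odd prime power with p ≠ 3, d = (q+3)/2, and χ the quadratic character of 𝔽_q. If χ(2) = 1, then the equation (x+1)^d − x^d = 1/2 has exactly one solution x ∈ 𝔽_q, namely x = −1/2. -/
theorem stmt15 (p n : ℕ) (hp : p.Prime) (hp2 : p ≠ 2) (hp3 : p ≠ 3) (hn : 0 < n)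
    (F : Type*) [Field F] [Fintype F] [DecidableEq F]
    (hcard : Fintype.card F = p ^ n) (hq : p ^ n % 4 = 3)
    (h2 : quadraticChar F 2 = 1) :
    ∀ x : F, (x + 1) ^ ((p ^ n + 3) / 2) - x ^ ((p ^ n + 3) / 2) = 2⁻¹ ↔ x = -2⁻¹ := by
  have h2F : (2 : F) ≠ 0 := by
    intro h
    rw [h] at h2
    simp at h2
  have hinv : (2 : F) * 2⁻¹ = 1 := mul_inv_cancel₀ h2F
  have hchar : ringChar F ≠ 2 := by
    intro h
    have := FiniteField.even_card_of_char_two h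
    rw [hcard] at this
    omega
  obtain ⟨k, hk⟩ : ∃ k, p ^ n = 4 * k + 3 := ⟨p ^ n / 4, by omega⟩
  have hd : (p ^ n + 3) / 2 = (2 * k + 1) + 2 := by omega
  have hcard2 : Fintype.card F / 2 = 2 * k + 1 := by rw [hcard]; omega
  have hns1 : ¬ IsSquare (-1 : F) := by
    rw [FiniteField.isSquare_neg_one_iff, hcard]
    omega
  have hs2 : IsSquare (2 : F) := (quadraticChar_one_iff_isSquare h2F).mp h2
  obtain ⟨c, hc⟩ := hs2
  have hcne : c ≠ 0 := by
    intro h; rw [h, mul_zero] at hc; exact h2F hc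
  have hcinv : c * c⁻¹ = 1 := mul_inv_cancel₀ hcne
  have hhalf : IsSquare ((2 : F)⁻¹) := ⟨c⁻¹, by rw [← mul_inv, ← hc]⟩
  have hhalfne : ((2 : F)⁻¹) ≠ 0 := inv_ne_zero h2F
  have hhalfpow : ((2 : F)⁻¹) ^ (2 * k + 1) = 1 := by
    rw [← hcard2]
    exact (FiniteField.isSquare_iff hchar hhalfne).mp hhalf
  have hodd : Odd (2 * k + 1 + 2) := ⟨k + 1, by ring⟩
  intro x
  rw [hd]
  constructor
  · intro heq
    by_cases hx0 : x = 0
    · subst hx0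
      rw [zero_add, one_pow, zero_pow (by omega), sub_zero] at heq
      exact absurd (by linear_combination 2 * heq + hinv : (1 : F) = 0) one_ne_zero
    by_cases hx1 : x + 1 = 0
    · rw [hx1] at heq
      have hxe : x = -1 := by linear_combination hx1
      rw [hxe, zero_pow (by omega), hodd.neg_one_pow] at heq
      exact absurd (by linear_combination 2 * heq + hinv : (1 : F) = 0) one_ne_zero
    have hsplit : ∀ y : F, y ^ (2 * k + 1 + 2) = y ^ (2 * k + 1) * y ^ 2 := fun y => pow_add y _ _
    rw [hsplit, hsplit] at heq
    have hxd := FiniteField.pow_dichotomy hchar hx0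
    have hx1d := FiniteField.pow_dichotomy hchar hx1
    rw [hcard2] at hxd hx1d
    have hxs : x ^ (2 * k + 1) = 1 → IsSquare x := fun h =>
      (FiniteField.isSquare_iff hchar hx0).mpr (by rw [hcard2]; exact h)
    rcases hx1d with ht | ht <;> rcases hxd with hs | hs <;> rw [ht, hs] at heq
    · -- t = 1, s = 1 : 4x + 1 = 0, x square ⇒ -1 square, contradiction
      exfalso
      have hx4 : (4 : F) * x + 1 = 0 := by linear_combination 2 * heq + hinv
      obtain ⟨u, hu⟩ := hxs hs
      exact hns1 ⟨2 * u, by linear_combination 4 * hu - hx4⟩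
    · -- t = 1, s = -1 : (2x+1)^2 = 0 ⇒ x = -1/2
      have hsq : (2 * x + 1) ^ 2 = 0 := by linear_combination 2 * heq + hinv
      have h := pow_eq_zero_iff (n := 2) (by norm_num) |>.mp hsq
      linear_combination 2⁻¹ * h - x * hinv
    · -- t = -1, s = 1 : (2x+1)^2 = -2 ⇒ -1 square, contradiction
      exfalso
      have hsq : (2 * x + 1) ^ 2 = -2 := by linear_combination -2 * heq - hinv
      refine hns1 ⟨(2 * x + 1) * c⁻¹, ?_⟩
      linear_combination (-(c⁻¹ ^ 2)) * hsq + c⁻¹ ^ 2 * hc + (c * c⁻¹ + 1) * hcinv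
    · -- t = -1, s = -1 : x + 1 = 1/4 is a square but t = -1, contradiction
      exfalso
      have h4 : ((2 : F) * 2) * (x + 1) = 1 := by linear_combination -2 * heq - hinv
      have hx1val : x + 1 = 2⁻¹ * 2⁻¹ := by
        rw [← mul_inv]
        exact (inv_eq_of_mul_eq_one_right h4).symm
      have hone : (x + 1) ^ (2 * k + 1) = 1 := by
        rw [hx1val, ← sq, ← pow_mul, mul_comm 2 (2 * k + 1), pow_mul, sq, hhalfpow]
        norm_num
      rw [ht] at hone
      exact h2F (by linear_combination -hone)
  · rintro rfl
    have h1 : (-(2 : F)⁻¹ + 1) = 2⁻¹ := by linear_combination -hinv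
    rw [h1, hodd.neg_pow, sub_neg_eq_add, ← two_mul, pow_add, hhalfpow, one_mul]
    linear_combination 2⁻¹ * hinv
end

section
/- Let q = p^n ≡ 3 (mod 4) be an odd prime power with p ≠ 3, d = (q+3)/2, and χ the quadratic character of 𝔽_q. Suppose χ(2) = −1. Then the equation (x+1)^d − x^d = −1/2 has exactly 3 solutions in 𝔽_q if χ(3) = −1 or if (χ(−3) = −1 and χ((−1+s)/2) = −1 for a square root s of −2 in 𝔽_q), and exactly 1 solution otherwise. -/
/-!
Since `q` is odd, the exponent `d = (q + 3) / 2` is `(q - 1) / 2 + 2`, so Euler's criterion gives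
`y ^ d = χ(y) y²` and the equation becomes `χ(x + 1) (x + 1)² - χ(x) x² = -1/2`. For each of the four
sign patterns of `(χ(x + 1), χ(x))` this is a linear or quadratic equation, whose solutions are
`-3/4`, the roots of `(2x + 1)² = -2`, `-1/2` and `-1/4`. As `q ≡ 3 (mod 4)` gives `χ(-1) = -1`, the
map `y ↦ χ(y) y²` is odd, so the solution set is invariant under `x ↦ -1 - x`; this pairs `-3/4`
with `-1/4` and the two roots with each other, leaving the fixed point `-1/2`, which is always a
solution. Finally `-3/4` is a solution iff `χ(3) = -1`, and a root `r` is one iff `χ(-3) = -1` and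
`χ(r) = -1`.
-/

theorem FiniteField.natCast_ne_zero_of_card_eq_prime_pow {F : Type*} [Field F] [Fintype F]
    {p n ℓ : ℕ} (hp : p.Prime) (hℓ : ℓ.Prime) (hcard : Fintype.card F = p ^ n) (hℓp : ℓ ≠ p) :
    (ℓ : F) ≠ 0 := by
  intro h
  have hchar : ringChar F = ℓ :=
    (Nat.prime_dvd_prime_iff_eq (CharP.char_is_prime F _) hℓ).1 (ringChar.dvd h)
  have hdvd : ℓ ∣ p ^ n := hchar ▸ hcard ▸ ringChar.dvd (FiniteField.cast_card_eq_zero F)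
  exact hℓp ((Nat.prime_dvd_prime_iff_eq hℓ hp).1 (hℓ.dvd_of_dvd_pow hdvd))

section

variable {F : Type*} [Field F] [Fintype F] [DecidableEq F]

local notation "χ" => quadraticChar F

theorem quadraticChar_inv (a : F) : χ a⁻¹ = χ a := by
  rw [← MulChar.inv_apply', (quadraticChar_isQuadratic F).inv]

theorem quadraticChar_mul_sq (a : F) {b : F} (hb : b ≠ 0) : χ (a * b ^ 2) = χ a := by
  rw [map_mul, quadraticChar_sq_one' hb, mul_one]

theorem ne_zero_of_quadraticChar_eq_neg_one {a : F} (h : χ a = -1) : a ≠ 0 := by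
  rintro rfl
  simp at h

theorem quadraticChar_neg (hm1 : χ (-1) = -1) (a : F) : χ (-a) = -χ a := by
  rw [neg_eq_neg_one_mul a, map_mul, hm1, neg_one_mul]

theorem pow_card_add_three_div_two (hF : ringChar F ≠ 2) (y : F) :
    y ^ ((Fintype.card F + 3) / 2) = χ y * y ^ 2 := by
  have hodd := FiniteField.odd_card_of_char_ne_two hF
  rw [show (Fintype.card F + 3) / 2 = Fintype.card F / 2 + 2 by omega, pow_add,
    quadraticChar_eq_pow_of_char_ne_two' hF]

namespace NegHalfEquation

def chiSq (y : F) : F := χ y * y ^ 2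

def IsSolution (x : F) : Prop := chiSq (x + 1) - chiSq x = -2⁻¹

theorem chiSq_neg (hm1 : χ (-1) = -1) (y : F) : chiSq (-y) = -chiSq y := by
  rw [chiSq, chiSq, quadraticChar_neg hm1]
  push_cast
  ring

theorem isSolution_neg_one_sub_iff (hm1 : χ (-1) = -1) (x : F) :
    IsSolution (-1 - x) ↔ IsSolution x := by
  rw [IsSolution, IsSolution, show -1 - x + 1 = -x by ring, show -1 - x = -(x + 1) by ring,
    chiSq_neg hm1, chiSq_neg hm1, neg_sub_neg]

theorem isSolution_iff_of_ne_zero (h2 : (2 : F) ≠ 0) {x : F} (hx : x ≠ 0) (hx1 : x + 1 ≠ 0) :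
    IsSolution x ↔
      (χ (x + 1) = 1 ∧ χ x = 1 ∧ x = -3 / 4) ∨
      (χ (x + 1) = 1 ∧ χ x = -1 ∧ (2 * x + 1) ^ 2 = -2) ∨
      (χ (x + 1) = -1 ∧ χ x = 1 ∧ x = -2⁻¹) ∨
      (χ (x + 1) = -1 ∧ χ x = -1 ∧ x = -1 / 4) := by
  rcases quadraticChar_dichotomy hx1 with ha | ha <;>
    rcases quadraticChar_dichotomy hx with hb | hb <;>
    simp only [IsSolution, chiSq, ha, hb, Int.reduceNeg, Int.reduceEq, true_and, false_and,
      or_false, false_or, Int.cast_one, Int.cast_neg, one_mul, neg_mul] <;>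
    grind

theorem not_isSolution_zero (h2 : (2 : F) ≠ 0) (h3 : (3 : F) ≠ 0) : ¬ IsSolution (0 : F) := by
  simp only [IsSolution, chiSq, zero_add, map_one]
  grind

theorem IsSolution.eq_or_sq_eq_neg_two (h2 : (2 : F) ≠ 0) (h3 : (3 : F) ≠ 0)
    (hm1 : χ (-1) = -1) {x : F} (hx : IsSolution x) :
    x = -2⁻¹ ∨ x = -3 / 4 ∨ x = -1 / 4 ∨ (2 * x + 1) ^ 2 = -2 := by
  have hx0 : x ≠ 0 := by
    rintro rfl
    exact not_isSolution_zero h2 h3 hx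
  have hx1 : x + 1 ≠ 0 := by
    intro h
    apply not_isSolution_zero h2 h3
    rwa [show (0 : F) = -1 - x by linear_combination h, isSolution_neg_one_sub_iff hm1]
  rcases (isSolution_iff_of_ne_zero h2 hx0 hx1).1 hx with
    ⟨-, -, h⟩ | ⟨-, -, h⟩ | ⟨-, -, h⟩ | ⟨-, -, h⟩ <;> simp only [h, true_or, or_true]

theorem isSolution_neg_half (h2 : χ 2 = -1) (hm1 : χ (-1) = -1) : IsSolution (-2⁻¹ : F) := by
  have two_ne : (2 : F) ≠ 0 := ne_zero_of_quadraticChar_eq_neg_one h2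
  rw [IsSolution, show -2⁻¹ + 1 = (2⁻¹ : F) by grind, chiSq_neg hm1, chiSq, quadraticChar_inv, h2]
  push_cast
  grind

theorem isSolution_neg_three_div_four_iff (h2 : (2 : F) ≠ 0) (h3 : (3 : F) ≠ 0)
    (hm1 : χ (-1) = -1) : IsSolution (-3 / 4 : F) ↔ χ 3 = -1 := by
  rw [IsSolution, show (-3 / 4 + 1 : F) = 1 * 2⁻¹ ^ 2 by grind,
    show (-3 / 4 : F) = -(3 * 2⁻¹ ^ 2) by grind, chiSq_neg hm1, chiSq, chiSq,
    quadraticChar_mul_sq _ (inv_ne_zero h2), quadraticChar_mul_sq _ (inv_ne_zero h2), map_one]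
  have h9 : (3 * 3 : F) ≠ 0 := mul_ne_zero h3 h3
  rcases quadraticChar_dichotomy h3 with h | h <;> rw [h] <;> push_cast <;> grind

theorem isSolution_iff_of_sq_eq (h2 : (2 : F) ≠ 0) (h3 : (3 : F) ≠ 0) {r : F}
    (hr : (2 * r + 1) ^ 2 = -2) : IsSolution r ↔ χ (-3) = -1 ∧ χ r = -1 := by
  have hprod : r * (r + 1) = -3 * 2⁻¹ ^ 2 := by grind
  have hr0 : r ≠ 0 ∧ r + 1 ≠ 0 :=
    mul_ne_zero_iff.1 (hprod ▸ mul_ne_zero (neg_ne_zero.2 h3) (pow_ne_zero 2 (inv_ne_zero h2)))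
  have hχ : χ r * χ (r + 1) = χ (-3) := by
    rw [← map_mul, hprod, quadraticChar_mul_sq _ (inv_ne_zero h2)]
  have h9 : (3 * 3 : F) ≠ 0 := mul_ne_zero h3 h3
  have hne : r ≠ -3 / 4 ∧ r ≠ -2⁻¹ ∧ r ≠ -1 / 4 := by
    refine ⟨?_, ?_, ?_⟩ <;> rintro rfl <;> grind
  rw [isSolution_iff_of_ne_zero h2 hr0.1 hr0.2, ← hχ]
  rcases quadraticChar_dichotomy hr0.1 with ha | ha <;>
    rcases quadraticChar_dichotomy hr0.2 with hb | hb <;>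
    simp [ha, hb, hne, hr]

theorem isSolution_iff (h2 : χ 2 = -1) (h3 : (3 : F) ≠ 0) (hm1 : χ (-1) = -1) {r : F}
    (hr : (2 * r + 1) ^ 2 = -2) (x : F) :
    IsSolution x ↔ x = -2⁻¹ ∨ (χ 3 = -1 ∧ (x = -3 / 4 ∨ x = -1 / 4)) ∨
      (IsSolution r ∧ (x = r ∨ x = -1 - r)) := by
  have two_ne : (2 : F) ≠ 0 := ne_zero_of_quadraticChar_eq_neg_one h2
  have hquarter : IsSolution (-1 / 4 : F) ↔ χ 3 = -1 := by
    rw [show (-1 / 4 : F) = -1 - (-3 / 4) by grind, isSolution_neg_one_sub_iff hm1,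
      isSolution_neg_three_div_four_iff two_ne h3 hm1]
  constructor
  · intro hx
    rcases hx.eq_or_sq_eq_neg_two two_ne h3 hm1 with rfl | rfl | rfl | hsq
    · exact Or.inl rfl
    · exact Or.inr (Or.inl ⟨(isSolution_neg_three_div_four_iff two_ne h3 hm1).1 hx, Or.inl rfl⟩)
    · exact Or.inr (Or.inl ⟨hquarter.1 hx, Or.inr rfl⟩)
    · right; right
      rcases sq_eq_sq_iff_eq_or_eq_neg.1 (hsq.trans hr.symm) with h | h
      · obtain rfl : x = r := by grind
        exact ⟨hx, Or.inl rfl⟩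
      · obtain rfl : x = -1 - r := by grind
        exact ⟨(isSolution_neg_one_sub_iff hm1 r).1 hx, Or.inr rfl⟩
  · rintro (rfl | ⟨h3', rfl | rfl⟩ | ⟨hr', rfl | rfl⟩)
    · exact isSolution_neg_half h2 hm1
    · exact (isSolution_neg_three_div_four_iff two_ne h3 hm1).2 h3'
    · exact hquarter.2 h3'
    · exact hr'
    · exact (isSolution_neg_one_sub_iff hm1 r).2 hr'

open Classical in
theorem card_isSolution (h2 : χ 2 = -1) (h3 : (3 : F) ≠ 0) (hm1 : χ (-1) = -1) {r : F}
    (hr : (2 * r + 1) ^ 2 = -2) :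
    Nat.card {x : F // IsSolution x} = if χ 3 = -1 ∨ IsSolution r then 3 else 1 := by
  have two_ne : (2 : F) ≠ 0 := ne_zero_of_quadraticChar_eq_neg_one h2
  have hexcl : χ 3 = -1 → ¬ IsSolution r := fun h hsol => by
    have := ((isSolution_iff_of_sq_eq two_ne h3 hr).1 hsol).1
    rw [quadraticChar_neg hm1, h] at this
    exact absurd this (by decide)
  have hne : (-2⁻¹ : F) ≠ -3 / 4 ∧ (-2⁻¹ : F) ≠ -1 / 4 ∧ (-3 / 4 : F) ≠ -1 / 4 := by grind
  have hne' : (-2⁻¹ : F) ≠ r ∧ (-2⁻¹ : F) ≠ -1 - r ∧ r ≠ -1 - r := by grind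
  change Set.ncard {x | IsSolution x} = _
  split_ifs with h
  · by_cases h3' : χ 3 = -1
    · refine Set.ncard_eq_three.2 ⟨_, _, _, hne.1, hne.2.1, hne.2.2, Set.ext fun x => ?_⟩
      simp only [Set.mem_ofPred_eq, isSolution_iff h2 h3 hm1 hr x, h3', hexcl h3', true_and,
        false_and, or_false, Set.mem_insert_iff, Set.mem_singleton_iff]
    · refine Set.ncard_eq_three.2 ⟨_, _, _, hne'.1, hne'.2.1, hne'.2.2, Set.ext fun x => ?_⟩
      simp only [Set.mem_ofPred_eq, isSolution_iff h2 h3 hm1 hr x, h3', h.resolve_left h3',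
        true_and, false_and, false_or, Set.mem_insert_iff, Set.mem_singleton_iff]
  · rw [not_or] at h
    refine Set.ncard_eq_one.2 ⟨-2⁻¹, Set.ext fun x => ?_⟩
    simp only [Set.mem_ofPred_eq, isSolution_iff h2 h3 hm1 hr x, h.1, h.2, false_and, or_false,
      Set.mem_singleton_iff]

theorem isSolution_iff_forall_sq_eq_neg_two (h2 : (2 : F) ≠ 0) (h3 : (3 : F) ≠ 0)
    (hm1 : χ (-1) = -1) {s : F} (hs : s ^ 2 = -2) :
    (χ (-3) = -1 ∧ ∀ t : F, t ^ 2 = -2 → χ ((-1 + t) / 2) = -1) ↔ IsSolution ((-1 + s) / 2) := by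
  have key : ∀ t : F, t ^ 2 = -2 →
      (IsSolution ((-1 + t) / 2) ↔ χ (-3) = -1 ∧ χ ((-1 + t) / 2) = -1) := fun t ht =>
    isSolution_iff_of_sq_eq h2 h3 (by grind)
  refine ⟨fun ⟨h3', hall⟩ => (key s hs).2 ⟨h3', hall s hs⟩, fun hsol => ?_⟩
  refine ⟨((key s hs).1 hsol).1, fun t ht => ?_⟩
  rcases sq_eq_sq_iff_eq_or_eq_neg.1 (ht.trans hs.symm) with rfl | rfl
  · exact ((key t ht).1 hsol).2
  · refine ((key _ ht).1 ?_).2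
    rwa [show (-1 + -s) / 2 = -1 - (-1 + s) / 2 by grind, isSolution_neg_one_sub_iff hm1]

end NegHalfEquation

open NegHalfEquation in
theorem card_pow_sub_pow_eq_neg_half (hq : Fintype.card F % 4 = 3) (h3 : (3 : F) ≠ 0)
    (h2 : χ 2 = -1) :
    Nat.card {x : F //
        (x + 1) ^ ((Fintype.card F + 3) / 2) - x ^ ((Fintype.card F + 3) / 2) = -2⁻¹} =
      if χ 3 = -1 ∨ (χ (-3) = -1 ∧ ∀ s : F, s ^ 2 = -2 → χ ((-1 + s) / 2) = -1) then 3
      else 1 := by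
  have hF : ringChar F ≠ 2 := by
    rw [Ne, FiniteField.even_card_iff_char_two]
    omega
  have hm1 : χ (-1) = -1 := by
    rw [quadraticChar_neg_one hF]
    exact ZMod.χ₄_nat_three_mod_four hq
  have two_ne : (2 : F) ≠ 0 := Ring.two_ne_zero hF
  obtain ⟨s, hs⟩ : IsSquare (-2 : F) := by
    rw [← quadraticChar_one_iff_isSquare (neg_ne_zero.2 two_ne),
      quadraticChar_neg hm1, h2, neg_neg]
  simp_rw [pow_card_add_three_div_two hF]
  change Nat.card {x : F // IsSolution x} = _
  rw [card_isSolution h2 h3 hm1 (by grind : (2 * ((-1 + s) / 2) + 1) ^ 2 = -2)]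
  congr 1
  exact propext (or_congr_right
    (isSolution_iff_forall_sq_eq_neg_two two_ne h3 hm1 (by rw [sq, hs])).symm)

end

theorem stmt16_general (p n : ℕ) (hp : p.Prime) (hp3 : p ≠ 3)
    (F : Type*) [Field F] [Fintype F] [DecidableEq F]
    (hcard : Fintype.card F = p ^ n) (hq : p ^ n % 4 = 3)
    (h2 : quadraticChar F 2 = -1) :
    ((quadraticChar F 3 = -1 ∨ (quadraticChar F (-3) = -1 ∧ ∀ s : F, s ^ 2 = -2 → quadraticChar F ((-1 + s) / 2) = -1)) →
      Nat.card {x : F // (x + 1) ^ ((p ^ n + 3) / 2) - x ^ ((p ^ n + 3) / 2) = -2⁻¹} = 3) ∧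
    (¬ (quadraticChar F 3 = -1 ∨ (quadraticChar F (-3) = -1 ∧ ∀ s : F, s ^ 2 = -2 → quadraticChar F ((-1 + s) / 2) = -1)) →
      Nat.card {x : F // (x + 1) ^ ((p ^ n + 3) / 2) - x ^ ((p ^ n + 3) / 2) = -2⁻¹} = 1) := by
  have h3 : ((3 : ℕ) : F) ≠ 0 :=
    FiniteField.natCast_ne_zero_of_card_eq_prime_pow hp Nat.prime_three hcard hp3.symm
  rw [← hcard] at hq ⊢
  rw [card_pow_sub_pow_eq_neg_half hq (by exact_mod_cast h3) h2]
  exact ⟨fun h => if_pos h, fun h => if_neg h⟩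

theorem stmt16 (p n : ℕ) (hp : p.Prime) (hp2 : p ≠ 2) (hp3 : p ≠ 3) (hn : 0 < n)
    (F : Type*) [Field F] [Fintype F] [DecidableEq F]
    (hcard : Fintype.card F = p ^ n) (hq : p ^ n % 4 = 3)
    (h2 : quadraticChar F 2 = -1) :
    ((quadraticChar F 3 = -1 ∨ (quadraticChar F (-3) = -1 ∧ ∀ s : F, s ^ 2 = -2 → quadraticChar F ((-1 + s) / 2) = -1)) →
      Nat.card {x : F // (x + 1) ^ ((p ^ n + 3) / 2) - x ^ ((p ^ n + 3) / 2) = -2⁻¹} = 3) ∧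
    (¬ (quadraticChar F 3 = -1 ∨ (quadraticChar F (-3) = -1 ∧ ∀ s : F, s ^ 2 = -2 → quadraticChar F ((-1 + s) / 2) = -1)) →
      Nat.card {x : F // (x + 1) ^ ((p ^ n + 3) / 2) - x ^ ((p ^ n + 3) / 2) = -2⁻¹} = 1) :=
  stmt16_general p n hp hp3 F hcard hq h2
end
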